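/- arXiv:2005.12786 — 11 statements merged into one kernel-verified Lean document; each statement's English description precedes it below -/
import Mathlib

section
/- Let H₁ and H₂ be complex Hilbert spaces, let T₁ be a bounded left-invertible operator on H₁ and T₂ a bounded left-invertible operator on H₂, and let V : H₁ → H₂ be a bounded invertible linear operator (continuous linear isomorphism) such that T₂ = V ∘ T₁ ∘ V⁻¹. Suppose M is a closed subspace of H₁ that is nearly T₁⁻¹-invariant with defect p, with defect space F. Then V(M) is a closed subspace of H₂, V(F) is a p-dimensional subspace of H₂, every g ∈ H₂ with T₂ g ∈ V(M) satisfies g ∈ V(M) + V(F), and consequently there exists a subspace F′ of H₂ orthogonal to V(M) with dim F′ ≤ p such that every g ∈ H₂ with T₂ g ∈ V(M) satisfies g ∈ V(M) + F′ (i.e. V(M) is nearly T₂⁻¹-invariant with defect at most p). -/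
/-!
Near `T⁻¹`-invariance is a purely linear condition, so the similarity `V` carries `(M, F)` to
`(V M, V F)`. The only thing lost is orthogonality of the defect space; it is restored by
replacing `V F` with its orthogonal projection onto `(V M)ᗮ`, which spans the same space modulo
`V M` and, since `V F` meets the closed space `V M` trivially, has the same dimension.
-/

namespace Submodule

theorem finrank_map_eq_of_disjoint_ker {R M N : Type*} [Ring R] [AddCommGroup M] [Module R M]
    [AddCommGroup N] [Module R N] (f : M →ₗ[R] N) {W : Submodule R M}
    (hW : Disjoint W (LinearMap.ker f)) :
    Module.finrank R (W.map f) = Module.finrank R W := by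
  have hinj : Function.Injective (f ∘ₗ W.subtype) := fun x y hxy =>
    Subtype.ext (LinearMap.injOn_of_disjoint_ker le_rfl hW x.2 y.2 hxy)
  rw [← LinearMap.finrank_range_of_inj hinj, LinearMap.range_comp, range_subtype]

theorem mem_map_sup_map_of_conj {R E₁ E₂ : Type*} [Semiring R] [AddCommMonoid E₁] [Module R E₁]
    [AddCommMonoid E₂] [Module R E₂] (V : E₁ ≃ₗ[R] E₂) {T₁ : E₁ →ₗ[R] E₁} {T₂ : E₂ →ₗ[R] E₂}
    (hV : ∀ x, T₂ x = V (T₁ (V.symm x))) {M F : Submodule R E₁}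
    (hnear : ∀ f, T₁ f ∈ M → f ∈ M ⊔ F) (g : E₂) (hg : T₂ g ∈ M.map (V : E₁ →ₗ[R] E₂)) :
    g ∈ M.map (V : E₁ →ₗ[R] E₂) ⊔ F.map (V : E₁ →ₗ[R] E₂) := by
  rw [← map_sup, mem_map_equiv]
  rw [mem_map_equiv, hV, LinearEquiv.symm_apply_apply] at hg
  exact hnear _ hg

section InnerProductSpace

variable {𝕜 E : Type*} [RCLike 𝕜] [NormedAddCommGroup E] [InnerProductSpace 𝕜 E]
  (K : Submodule 𝕜 E) [K.HasOrthogonalProjection] (W : Submodule 𝕜 E)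

theorem map_starProjection_orthogonal_le : W.map (Kᗮ.starProjection : E →ₗ[𝕜] E) ≤ Kᗮ := by
  simpa using LinearMap.map_le_range (f := Kᗮ.starProjection.toLinearMap) (p := W)

theorem sup_le_sup_map_starProjection_orthogonal :
    K ⊔ W ≤ K ⊔ W.map (Kᗮ.starProjection : E →ₗ[𝕜] E) := by
  refine sup_le le_sup_left fun w hw => ?_
  rw [← K.starProjection_add_starProjection_orthogonal w]
  exact add_mem_sup (K.starProjection_apply_mem w) (mem_map_of_mem hw)

theorem finrank_map_starProjection_orthogonal {W : Submodule 𝕜 E} (hW : Disjoint W K) :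
    Module.finrank 𝕜 (W.map (Kᗮ.starProjection : E →ₗ[𝕜] E)) = Module.finrank 𝕜 W :=
  finrank_map_eq_of_disjoint_ker _ (by simpa [orthogonal_orthogonal] using hW)

end InnerProductSpace

end Submodule

theorem stmt_0_general
    {H₁ H₂ : Type*} [NormedAddCommGroup H₁] [InnerProductSpace ℂ H₁]
    [NormedAddCommGroup H₂] [InnerProductSpace ℂ H₂] [CompleteSpace H₂]
    (T₁ : H₁ →L[ℂ] H₁) (T₂ : H₂ →L[ℂ] H₂)
    (V : H₁ ≃L[ℂ] H₂)
    (hV : ∀ x : H₂, T₂ x = V (T₁ (V.symm x)))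
    (M F : Submodule ℂ H₁) (hMclosed : IsClosed (M : Set H₁))
    (p : ℕ) (hFdim : Module.finrank ℂ F = p) (hFM : F ≤ Mᗮ)
    (hnear : ∀ f : H₁, T₁ f ∈ M → f ∈ M ⊔ F) :
    IsClosed ((M.map (V : H₁ →ₗ[ℂ] H₂) : Submodule ℂ H₂) : Set H₂) ∧
    Module.finrank ℂ (F.map (V : H₁ →ₗ[ℂ] H₂)) = p ∧
    (∀ g : H₂, T₂ g ∈ M.map (V : H₁ →ₗ[ℂ] H₂) →
      g ∈ M.map (V : H₁ →ₗ[ℂ] H₂) ⊔ F.map (V : H₁ →ₗ[ℂ] H₂)) ∧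
    ∃ F' : Submodule ℂ H₂, F' ≤ (M.map (V : H₁ →ₗ[ℂ] H₂))ᗮ ∧
      Module.finrank ℂ F' ≤ p ∧
      ∀ g : H₂, T₂ g ∈ M.map (V : H₁ →ₗ[ℂ] H₂) →
        g ∈ M.map (V : H₁ →ₗ[ℂ] H₂) ⊔ F' := by
  set N := M.map (V : H₁ →ₗ[ℂ] H₂)
  set VF := F.map (V : H₁ →ₗ[ℂ] H₂)
  have hNclosed : IsClosed (N : Set H₂) := V.isClosed_image.2 hMclosed
  have : CompleteSpace N := hNclosed.completeSpace_coe
  have hVFdim : Module.finrank ℂ VF = p := hFdim ▸ LinearEquiv.finrank_map_eq V.toLinearEquiv F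
  have hnearV : ∀ g, T₂ g ∈ N → g ∈ N ⊔ VF :=
    Submodule.mem_map_sup_map_of_conj V.toLinearEquiv hV hnear
  have hdisj : Disjoint VF N :=
    Submodule.disjoint_map V.injective (M.orthogonal_disjoint.symm.mono_left hFM)
  refine ⟨hNclosed, hVFdim, hnearV, VF.map (Nᗮ.starProjection : H₂ →ₗ[ℂ] H₂),
    N.map_starProjection_orthogonal_le VF, ?_, fun g hg => ?_⟩
  · rw [N.finrank_map_starProjection_orthogonal hdisj, hVFdim]
  · exact N.sup_le_sup_map_starProjection_orthogonal VF (hnearV g hg)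

/-- Nearly `T⁻¹`-invariant subspaces with defect transfer under similarity. -/
theorem stmt_0
    {H₁ H₂ : Type*} [NormedAddCommGroup H₁] [InnerProductSpace ℂ H₁] [CompleteSpace H₁]
    [NormedAddCommGroup H₂] [InnerProductSpace ℂ H₂] [CompleteSpace H₂]
    (T₁ : H₁ →L[ℂ] H₁) (T₂ : H₂ →L[ℂ] H₂)
    (hT₁ : ∃ L : H₁ →L[ℂ] H₁, L.comp T₁ = ContinuousLinearMap.id ℂ H₁)
    (hT₂ : ∃ L : H₂ →L[ℂ] H₂, L.comp T₂ = ContinuousLinearMap.id ℂ H₂)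
    (V : H₁ ≃L[ℂ] H₂)
    (hV : ∀ x : H₂, T₂ x = V (T₁ (V.symm x)))
    (M F : Submodule ℂ H₁) (hMclosed : IsClosed (M : Set H₁))
    (p : ℕ) (hFdim : Module.finrank ℂ F = p) (hFM : F ≤ Mᗮ)
    (hnear : ∀ f : H₁, T₁ f ∈ M → f ∈ M ⊔ F) :
    IsClosed ((M.map (V : H₁ →ₗ[ℂ] H₂) : Submodule ℂ H₂) : Set H₂) ∧
    Module.finrank ℂ (F.map (V : H₁ →ₗ[ℂ] H₂)) = p ∧
    (∀ g : H₂, T₂ g ∈ M.map (V : H₁ →ₗ[ℂ] H₂) →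
      g ∈ M.map (V : H₁ →ₗ[ℂ] H₂) ⊔ F.map (V : H₁ →ₗ[ℂ] H₂)) ∧
    ∃ F' : Submodule ℂ H₂, F' ≤ (M.map (V : H₁ →ₗ[ℂ] H₂))ᗮ ∧
      Module.finrank ℂ F' ≤ p ∧
      ∀ g : H₂, T₂ g ∈ M.map (V : H₁ →ₗ[ℂ] H₂) →
        g ∈ M.map (V : H₁ →ₗ[ℂ] H₂) ⊔ F' :=
  stmt_0_general T₁ T₂ V hV M F hMclosed p hFdim hFM hnear
end

section
/- Let H be a complex Hilbert space and let T be a bounded operator on H which is an isometry such that ‖(T*)ⁿ h‖ → 0 as n → ∞ for every h ∈ H (equivalently ⋂ₙ Tⁿ(H) = {0}), and such that dim ker T* = m for a natural number m ≥ 1. Then there exists a unitary operator (isometric linear equivalence) U : H → ℓ²(ℕ, ℂᵐ) such that U(T h) = S(U h) for all h ∈ H, where S is the forward shift on ℓ²(ℕ, ℂᵐ) given by (S a)(0) = 0 and (S a)(n+1) = a(n). -/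
/-!
Wold decomposition of a pure isometry. Put `W = ker T† = H ⊖ T(H)`. Since `T` is isometric and
`W ⊥ T(H)`, the subspaces `Tⁿ(W)` are mutually orthogonal copies of `W`. A vector orthogonal to all
of them lies in every `Tⁿ(H)`, so `T†ⁿ` preserves its norm, and purity forces it to vanish. Hence
`H = ⨁ₙ Tⁿ(W)` is a Hilbert sum, which identifies `H` with `ℓ²(ℕ, W)` and `T` with the shift.
-/

open ContinuousLinearMap Filter Topology
open scoped InnerProductSpace

theorem IsHilbertSum.inner_linearIsometryEquiv_apply {𝕜 ι E : Type*} [RCLike 𝕜]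
    [NormedAddCommGroup E] [InnerProductSpace 𝕜 E] [CompleteSpace E] {G : ι → Type*}
    [∀ i, NormedAddCommGroup (G i)] [∀ i, InnerProductSpace 𝕜 (G i)] {V : ∀ i, G i →ₗᵢ[𝕜] E}
    (hV : IsHilbertSum 𝕜 G V) (x : E) (i : ι) (y : G i) :
    ⟪y, (hV.linearIsometryEquiv x : ∀ i, G i) i⟫_𝕜 = ⟪V i y, x⟫_𝕜 := by
  classical
  rw [← lp.inner_single_left, ← hV.linearIsometryEquiv.inner_map_map (V i y),
    ← hV.linearIsometryEquiv_symm_apply_single, LinearIsometryEquiv.apply_symm_apply]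

namespace ContinuousLinearMap

variable {𝕜 H : Type*} [RCLike 𝕜] [NormedAddCommGroup H] [InnerProductSpace 𝕜 H] {T : H →L[𝕜] H}

theorem norm_pow_apply_of_norm_map (hT : ∀ x, ‖T x‖ = ‖x‖) (n : ℕ) (x : H) :
    ‖(T ^ n) x‖ = ‖x‖ := by
  induction n with
  | zero => rfl
  | succ n ih => rw [pow_succ', mul_apply_eq_comp, hT, ih]

variable [CompleteSpace H]

theorem adjoint_apply_apply_of_norm_map (hT : ∀ x, ‖T x‖ = ‖x‖) (x : H) : adjoint T (T x) = x :=
  congr($((norm_map_iff_adjoint_comp_self T).mp hT) x)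

theorem adjoint_pow_apply_pow_apply_of_norm_map (hT : ∀ x, ‖T x‖ = ‖x‖) (n : ℕ) (x : H) :
    (adjoint T ^ n) ((T ^ n) x) = x := by
  rw [← star_eq_adjoint, ← star_pow, star_eq_adjoint]
  exact adjoint_apply_apply_of_norm_map (norm_pow_apply_of_norm_map hT n) x

variable (T) in
noncomputable abbrev wanderingSubspace : Submodule 𝕜 H := LinearMap.ker (adjoint T : H →ₗ[𝕜] H)

theorem inner_apply_eq_zero_of_mem_wanderingSubspace {w : H} (hw : w ∈ wanderingSubspace T)
    (x : H) : ⟪w, T x⟫_𝕜 = 0 := by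
  rw [← adjoint_inner_left, show adjoint T w = 0 from hw, inner_zero_left]

section Pure

variable (hT : ∀ x, ‖T x‖ = ‖x‖)
include hT

theorem apply_adjoint_apply_eq_of_orthogonal {x : H}
    (hx : ∀ w ∈ wanderingSubspace T, ⟪w, x⟫_𝕜 = 0) : T (adjoint T x) = x := by
  have hd : x - T (adjoint T x) ∈ wanderingSubspace T := by
    rw [LinearMap.mem_ker, coe_coe, map_sub, adjoint_apply_apply_of_norm_map hT, sub_self]
  have hdd : ⟪x - T (adjoint T x), x - T (adjoint T x)⟫_𝕜 = 0 := by
    rw [inner_sub_right, hx _ hd, inner_apply_eq_zero_of_mem_wanderingSubspace hd, sub_zero]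
  exact (sub_eq_zero.mp (inner_self_eq_zero.mp hdd)).symm

theorem exists_pow_apply_eq_of_orthogonal {x : H}
    (hx : ∀ n, ∀ w ∈ wanderingSubspace T, ⟪(T ^ n) w, x⟫_𝕜 = 0) (n : ℕ) :
    ∃ y, (T ^ n) y = x := by
  induction n with
  | zero => exact ⟨x, rfl⟩
  | succ n ih =>
    obtain ⟨y, rfl⟩ := ih
    have hy : ∀ w ∈ wanderingSubspace T, ⟪w, y⟫_𝕜 = 0 := fun w hw => by
      rw [← hx n w hw, (LinearMap.norm_map_iff_inner_map_map (T ^ n)).mp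
        (norm_pow_apply_of_norm_map hT n)]
    refine ⟨adjoint T y, ?_⟩
    rw [pow_succ, mul_apply_eq_comp, apply_adjoint_apply_eq_of_orthogonal hT hy]

theorem eq_zero_of_orthogonal_of_tendsto {x : H}
    (hpure : Tendsto (fun n => ‖(adjoint T ^ n) x‖) atTop (𝓝 0))
    (hx : ∀ n, ∀ w ∈ wanderingSubspace T, ⟪(T ^ n) w, x⟫_𝕜 = 0) : x = 0 := by
  have hnorm : ∀ n, ‖(adjoint T ^ n) x‖ = ‖x‖ := fun n => by
    obtain ⟨y, rfl⟩ := exists_pow_apply_eq_of_orthogonal hT hx n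
    rw [adjoint_pow_apply_pow_apply_of_norm_map hT, norm_pow_apply_of_norm_map hT]
  simp only [hnorm] at hpure
  exact norm_eq_zero.mp (tendsto_nhds_unique tendsto_const_nhds hpure)

end Pure

section WanderingFamily

variable {E : Type*} [NormedAddCommGroup E] [InnerProductSpace 𝕜 E]

noncomputable def wanderingFamily (hT : ∀ x, ‖T x‖ = ‖x‖) (e : E ≃ₗᵢ[𝕜] wanderingSubspace T)
    (n : ℕ) : E →ₗᵢ[𝕜] H where
  toLinearMap := (T ^ n).toLinearMap ∘ₗ (wanderingSubspace T).subtype ∘ₗ e.toLinearMap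
  norm_map' y := (norm_pow_apply_of_norm_map hT n _).trans (e.norm_map y)

variable (hT : ∀ x, ‖T x‖ = ‖x‖) (e : E ≃ₗᵢ[𝕜] wanderingSubspace T)

theorem wanderingFamily_apply (n : ℕ) (y : E) : wanderingFamily hT e n y = (T ^ n) (e y) := rfl

theorem orthogonalFamily_wanderingFamily :
    OrthogonalFamily 𝕜 (fun _ : ℕ => E) (wanderingFamily hT e) := by
  have hlt : ∀ i j, i < j → ∀ x y,
      ⟪wanderingFamily hT e i x, wanderingFamily hT e j y⟫_𝕜 = 0 := by
    intro i j hij x y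
    obtain ⟨k, rfl⟩ := Nat.exists_eq_add_of_lt hij
    rw [wanderingFamily_apply, wanderingFamily_apply, add_assoc, pow_add, mul_apply_eq_comp,
      (LinearMap.norm_map_iff_inner_map_map (T ^ i)).mp (norm_pow_apply_of_norm_map hT i),
      pow_succ', mul_apply_eq_comp]
    exact inner_apply_eq_zero_of_mem_wanderingSubspace (e x).2 _
  intro i j hij x y
  rcases hij.lt_or_gt with h | h
  · exact hlt i j h x y
  · rw [← inner_conj_symm, hlt j i h y x, map_zero]

variable [CompleteSpace E] (hpure : ∀ x, Tendsto (fun n => ‖(adjoint T ^ n) x‖) atTop (𝓝 0))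
include hpure

theorem isHilbertSum_wanderingFamily :
    IsHilbertSum 𝕜 (fun _ : ℕ => E) (wanderingFamily hT e) := by
  refine .mk (orthogonalFamily_wanderingFamily hT e) ?_
  rw [top_le_iff, Submodule.topologicalClosure_eq_top_iff, Submodule.eq_bot_iff]
  refine fun x hx => eq_zero_of_orthogonal_of_tendsto hT (hpure x) fun n w hw => ?_
  simpa [wanderingFamily_apply] using (Submodule.mem_orthogonal _ x).mp hx _
    (Submodule.mem_iSup_of_mem n ⟨e.symm ⟨w, hw⟩, rfl⟩)

theorem linearIsometryEquiv_wanderingFamily_apply_zero (x : H) :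
    ((isHilbertSum_wanderingFamily hT e hpure).linearIsometryEquiv (T x) : ∀ _ : ℕ, E) 0 = 0 := by
  refine ext_inner_left 𝕜 fun y => ?_
  rw [(isHilbertSum_wanderingFamily hT e hpure).inner_linearIsometryEquiv_apply,
    wanderingFamily_apply, pow_zero, one_apply_eq_self, inner_zero_right,
    inner_apply_eq_zero_of_mem_wanderingSubspace (e y).2]

theorem linearIsometryEquiv_wanderingFamily_apply_succ (x : H) (n : ℕ) :
    ((isHilbertSum_wanderingFamily hT e hpure).linearIsometryEquiv (T x) : ∀ _ : ℕ, E) (n + 1) =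
      ((isHilbertSum_wanderingFamily hT e hpure).linearIsometryEquiv x : ∀ _ : ℕ, E) n := by
  refine ext_inner_left 𝕜 fun y => ?_
  rw [(isHilbertSum_wanderingFamily hT e hpure).inner_linearIsometryEquiv_apply,
    (isHilbertSum_wanderingFamily hT e hpure).inner_linearIsometryEquiv_apply,
    wanderingFamily_apply, wanderingFamily_apply, pow_succ', mul_apply_eq_comp,
    (LinearMap.norm_map_iff_inner_map_map T).mp hT]

end WanderingFamily

end ContinuousLinearMap

/-- Any shift operator of multiplicity `m ≥ 1` is unitarily equivalent to the
forward shift on `ℓ²(ℕ, ℂᵐ)`. -/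
theorem stmt_3 {H : Type*} [NormedAddCommGroup H] [InnerProductSpace ℂ H] [CompleteSpace H]
    (m : ℕ) (hm : 1 ≤ m) (T : H →L[ℂ] H)
    (hTiso : ∀ h : H, ‖T h‖ = ‖h‖)
    (hTpure : ∀ h : H, Filter.Tendsto
      (fun n : ℕ => ‖((ContinuousLinearMap.adjoint T) ^ n) h‖) Filter.atTop (nhds 0))
    (hker : Module.finrank ℂ
      (LinearMap.ker (ContinuousLinearMap.adjoint T : H →ₗ[ℂ] H) : Submodule ℂ H) = m) :
    ∃ U : H ≃ₗᵢ[ℂ] lp (fun _ : ℕ => EuclideanSpace ℂ (Fin m)) 2,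
      ∀ h : H, (U (T h) : ∀ _ : ℕ, EuclideanSpace ℂ (Fin m)) 0 = 0 ∧
        ∀ n : ℕ, (U (T h) : ∀ _ : ℕ, EuclideanSpace ℂ (Fin m)) (n + 1)
          = (U h : ∀ _ : ℕ, EuclideanSpace ℂ (Fin m)) n := by
  -- `finrank` is `0` on infinite-dimensional spaces, so `1 ≤ m` is what makes `ker T†` finite.
  have : FiniteDimensional ℂ (wanderingSubspace T) := .of_finrank_pos (hker ▸ hm)
  let e := ((stdOrthonormalBasis ℂ (wanderingSubspace T)).reindex (finCongr hker)).repr.symm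
  exact ⟨_, fun h => ⟨linearIsometryEquiv_wanderingFamily_apply_zero hTiso e hTpure h,
    linearIsometryEquiv_wanderingFamily_apply_succ hTiso e hTpure h⟩⟩
end

section
/- Let H be a complex Hilbert space, let T be a bounded operator on H with ‖h‖ ≤ ‖T h‖ for all h ∈ H, and let M be a closed subspace of H. Then T(H) and M ∩ T(H) are closed subspaces of H, and there exists a unique bounded operator R on H such that T ∘ R equals the orthogonal projection of H onto M ∩ T(H); moreover ‖R‖ ≤ 1. (R is given explicitly by R = (T*T)⁻¹ T* P_{M ∩ T(H)}, where T*T is invertible because T is bounded below.) -/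
/-!
A bounded operator `T` with `‖h‖ ≤ ‖T h‖` is a topological isomorphism of `H` onto its range,
which is therefore closed. Since the projection `P` onto `M ∩ T(H)` takes values in `T(H)`,
`R := T⁻¹ ∘ P` is well defined and bounded, and `‖R x‖ ≤ ‖T (R x)‖ = ‖P x‖ ≤ ‖x‖`.
Uniqueness is injectivity of `T`.
-/

/-- `P` is the orthogonal projection of the ambient space onto the subspace `L`. -/
def IsOrthoProjOn {H : Type*} [NormedAddCommGroup H] [InnerProductSpace ℂ H]
    (L : Submodule ℂ H) (P : H →L[ℂ] H) : Prop :=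
  (∀ x, P x ∈ L) ∧ ∀ x, x - P x ∈ Lᗮ

theorem IsOrthoProjOn.norm_apply_le {H : Type*} [NormedAddCommGroup H] [InnerProductSpace ℂ H]
    {L : Submodule ℂ H} {P : H →L[ℂ] H} (hP : IsOrthoProjOn L P) (x : H) : ‖P x‖ ≤ ‖x‖ := by
  have hpythagoras := norm_add_sq_eq_norm_sq_add_norm_sq_of_inner_eq_zero (P x) (x - P x)
    (Submodule.inner_right_of_mem_orthogonal (hP.1 x) (hP.2 x))
  rw [add_sub_cancel] at hpythagoras
  nlinarith [norm_nonneg (P x), norm_nonneg x, mul_self_nonneg ‖x - P x‖]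

namespace ContinuousLinearMap

variable {𝕜 E F G : Type*} [NontriviallyNormedField 𝕜]
  [NormedAddCommGroup E] [NormedSpace 𝕜 E] [NormedAddCommGroup F] [NormedSpace 𝕜 F]
  [NormedAddCommGroup G] [NormedSpace 𝕜 G]

theorem exists_comp_eq_of_antilipschitz {T : E →L[𝕜] F} {K : NNReal} (hT : AntilipschitzWith K T)
    (P : G →L[𝕜] F) (hP : ∀ x, P x ∈ LinearMap.range (T : E →ₗ[𝕜] F)) :
    ∃ R : G →L[𝕜] E, T.comp R = P := by
  let e := LinearEquiv.ofInjective (T : E →ₗ[𝕜] F) hT.injective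
  have hT_e_symm : ∀ y, T (e.symm y) = y := fun y => congrArg Subtype.val (e.apply_symm_apply y)
  let R : G →ₗ[𝕜] E := e.symm.toLinearMap ∘ₗ (P : G →ₗ[𝕜] F).codRestrict _ hP
  have hTR : ∀ x, T (R x) = P x := fun x => hT_e_symm _
  refine ⟨R.mkContinuous (K * ‖P‖) fun x => ?_, ext hTR⟩
  calc ‖R x‖ ≤ K * ‖T (R x)‖ := T.bound_of_antilipschitz hT _
    _ ≤ K * (‖P‖ * ‖x‖) := by rw [hTR]; gcongr; exact P.le_opNorm x
    _ = K * ‖P‖ * ‖x‖ := (mul_assoc _ _ _).symm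

end ContinuousLinearMap

/-- for `T` bounded below by `1`, the subspaces `T(H)` and `M ∩ T(H)` are closed
and there is a unique bounded `R` with `T ∘ R = P_{M ∩ T(H)}`, which moreover has `‖R‖ ≤ 1`. -/
theorem stmt_8 {H : Type*} [NormedAddCommGroup H] [InnerProductSpace ℂ H] [CompleteSpace H]
    (T : H →L[ℂ] H) (hT : ∀ h : H, ‖h‖ ≤ ‖T h‖)
    (M : Submodule ℂ H) (hMclosed : IsClosed (M : Set H))
    (P : H →L[ℂ] H) (hP : IsOrthoProjOn (M ⊓ LinearMap.range (T : H →ₗ[ℂ] H)) P) :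
    IsClosed ((LinearMap.range (T : H →ₗ[ℂ] H) : Submodule ℂ H) : Set H) ∧
    IsClosed ((M ⊓ LinearMap.range (T : H →ₗ[ℂ] H) : Submodule ℂ H) : Set H) ∧
    ∃ R : H →L[ℂ] H, (T.comp R = P ∧ ‖R‖ ≤ 1) ∧
      ∀ R' : H →L[ℂ] H, T.comp R' = P → R' = R := by
  have hanti : AntilipschitzWith 1 T := T.antilipschitz_of_bound (by simpa using hT)
  have hrange_closed : IsClosed (Set.range T) := hanti.isClosed_range T.uniformContinuous
  obtain ⟨R, hTR⟩ := T.exists_comp_eq_of_antilipschitz hanti P fun x => (hP.1 x).2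
  have hR_norm : ‖R‖ ≤ 1 := R.opNorm_le_bound zero_le_one fun x =>
    calc ‖R x‖ ≤ ‖T (R x)‖ := hT _
      _ = ‖P x‖ := by rw [← hTR, ContinuousLinearMap.comp_apply]
      _ ≤ 1 * ‖x‖ := (one_mul ‖x‖).symm ▸ hP.norm_apply_le x
  exact ⟨hrange_closed, hMclosed.inter hrange_closed, R, ⟨hTR, hR_norm⟩,
    fun R' hTR' => ContinuousLinearMap.cancel_left hanti.injective (hTR'.trans hTR.symm)⟩
end

section
/- Let H be a complex Hilbert space, let T be a bounded operator on H with ‖h‖ ≤ ‖T h‖ for all h ∈ H, and let M be a closed subspace of H that is nearly T⁻¹-invariant with defect p, with defect space F orthogonal to M. Let R be the unique bounded operator on H with T ∘ R = P_{M ∩ T(H)}, let Q = P_{M ⊖ (M ∩ T(H))}, and let S′ = P_F. Then for every h ∈ M and every m ∈ ℕ: h = Σ_{k=0}^{m} T^k Q R^k h + T^{m+1} R^{m+1} h + Σ_{k=1}^{m} T^k S′ R^k h. -/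
/-!
Write `N = M ∩ T(H)`. For `g ∈ M + F` one has `g = Q g + S' g + P_N g` with `P_N g = T R g`,
and `T R^(k+1) h = P_N R^k h ∈ M` puts every `R^(k+1) h` in `M + F` by near invariance; for
`h ∈ M` itself `S' h = 0`. Peeling off `Q`, `S'` and `T R` repeatedly gives the identity.
-/

section Telescoping

variable {R E : Type*} [Semiring R] [TopologicalSpace E] [AddCommMonoid E] [Module R E]

theorem ContinuousLinearMap.eq_sum_add_pow_add_sum_of_eq_add (T A Q S : E →L[R] E) (h : E)
    (h_zero : h = Q h + T (A h))
    (h_succ : ∀ k, (A ^ (k + 1)) h =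
      Q ((A ^ (k + 1)) h) + S ((A ^ (k + 1)) h) + T (A ((A ^ (k + 1)) h)))
    (m : ℕ) :
    h = (∑ k ∈ Finset.range (m + 1), (T ^ k) (Q ((A ^ k) h)))
      + (T ^ (m + 1)) ((A ^ (m + 1)) h)
      + ∑ k ∈ Finset.Icc 1 m, (T ^ k) (S ((A ^ k) h)) := by
  induction m with
  | zero => simpa using h_zero
  | succ m ih =>
    have h_last : (T ^ (m + 1)) ((A ^ (m + 1)) h) = (T ^ (m + 1)) (Q ((A ^ (m + 1)) h))
        + (T ^ (m + 1)) (S ((A ^ (m + 1)) h)) + (T ^ (m + 2)) ((A ^ (m + 2)) h) := by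
      conv_lhs => rw [h_succ m]
      rw [pow_succ T (m + 1), pow_succ' A (m + 1)]
      simp only [map_add, mul_apply_eq_comp]
    rw [Finset.sum_range_succ, Finset.sum_Icc_succ_top (Nat.le_add_left 1 m)]
    rw [h_last] at ih
    conv_lhs => rw [ih]
    abel

end Telescoping

namespace IsOrthoProjOn

variable {H : Type*} [NormedAddCommGroup H] [InnerProductSpace ℂ H]
  {L : Submodule ℂ H} {P : H →L[ℂ] H}

theorem apply_eq (hP : IsOrthoProjOn L P) {x a : H} (ha : a ∈ L) (hxa : x - a ∈ Lᗮ) :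
    P x = a := by
  have h_mem : P x - a ∈ L := L.sub_mem (hP.1 x) ha
  have h_mem_orth : P x - a ∈ Lᗮ := by
    simpa using Lᗮ.sub_mem hxa (hP.2 x)
  exact sub_eq_zero.mp ((Submodule.mem_bot ℂ).mp
    (L.orthogonal_disjoint.le_bot ⟨h_mem, h_mem_orth⟩))

theorem apply_add_of_mem_orthogonal (hP : IsOrthoProjOn L P) (x : H) {b : H} (hb : b ∈ Lᗮ) :
    P (x + b) = P x :=
  hP.apply_eq (hP.1 x) (by simpa [add_sub_right_comm] using Lᗮ.add_mem (hP.2 x) hb)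

theorem apply_eq_zero_of_mem_orthogonal (hP : IsOrthoProjOn L P) {b : H} (hb : b ∈ Lᗮ) :
    P b = 0 := by
  simpa using hP.apply_add_of_mem_orthogonal 0 hb

theorem apply_eq_self (hP : IsOrthoProjOn L P) {a : H} (ha : a ∈ L) : P a = a :=
  hP.apply_eq ha (by simp)

theorem apply_eq_sub_of_le {M N : Submodule ℂ H} (hNM : N ≤ M) {Q : H →L[ℂ] H}
    (hQ : IsOrthoProjOn (M ⊓ Nᗮ) Q) (hP : IsOrthoProjOn N P) {a : H} (ha : a ∈ M) :
    Q a = a - P a :=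
  hQ.apply_eq ⟨M.sub_mem ha (hNM (hP.1 a)), hP.2 a⟩
    (by simpa using Submodule.orthogonal_le inf_le_right (N.le_orthogonal_orthogonal (hP.1 a)))

theorem add_add_eq_of_mem_sup {M N F : Submodule ℂ H} (hNM : N ≤ M) (hFM : F ≤ Mᗮ)
    {Q S : H →L[ℂ] H} (hP : IsOrthoProjOn N P) (hQ : IsOrthoProjOn (M ⊓ Nᗮ) Q)
    (hS : IsOrthoProjOn F S) {g : H} (hg : g ∈ M ⊔ F) :
    Q g + S g + P g = g := by
  obtain ⟨a, ha, b, hb, rfl⟩ := Submodule.mem_sup.mp hg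
  have hbM : b ∈ Mᗮ := hFM hb
  have hP_eq : P (a + b) = P a :=
    hP.apply_add_of_mem_orthogonal a (Submodule.orthogonal_le hNM hbM)
  have hQ_eq : Q (a + b) = a - P a := by
    rw [hQ.apply_add_of_mem_orthogonal a (Submodule.orthogonal_le inf_le_left hbM),
      hQ.apply_eq_sub_of_le hNM hP ha]
  have hS_eq : S (a + b) = b := by
    rw [add_comm, hS.apply_add_of_mem_orthogonal b
      ((Submodule.isOrtho_iff_le.mpr hFM).ge ha), hS.apply_eq_self hb]
  rw [hP_eq, hQ_eq, hS_eq]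
  abel

end IsOrthoProjOn

theorem stmt_9_general {H : Type*} [NormedAddCommGroup H] [InnerProductSpace ℂ H]
    (T : H →L[ℂ] H)
    (M F : Submodule ℂ H)
    (hFM : F ≤ Mᗮ)
    (hnear : ∀ f : H, T f ∈ M → f ∈ M ⊔ F)
    (P : H →L[ℂ] H) (hP : IsOrthoProjOn (M ⊓ LinearMap.range (T : H →ₗ[ℂ] H)) P)
    (R : H →L[ℂ] H) (hR : T.comp R = P)
    (Q : H →L[ℂ] H) (hQ : IsOrthoProjOn (M ⊓ (M ⊓ LinearMap.range (T : H →ₗ[ℂ] H))ᗮ) Q)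
    (S' : H →L[ℂ] H) (hS' : IsOrthoProjOn F S') :
    ∀ h ∈ M, ∀ m : ℕ,
      h = (∑ k ∈ Finset.range (m + 1), (T ^ k) (Q ((R ^ k) h)))
        + (T ^ (m + 1)) ((R ^ (m + 1)) h)
        + ∑ k ∈ Finset.Icc 1 m, (T ^ k) (S' ((R ^ k) h)) := by
  intro h hh m
  have hTR : ∀ x, T (R x) = P x := fun x => by rw [← hR]; rfl
  have decomp : ∀ g ∈ M ⊔ F, g = Q g + S' g + T (R g) := fun g hg => by
    rw [hTR, IsOrthoProjOn.add_add_eq_of_mem_sup inf_le_left hFM hP hQ hS' hg]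
  refine T.eq_sum_add_pow_add_sum_of_eq_add R Q S' h ?_ (fun k => decomp _ (hnear _ ?_)) m
  · have hS'h : S' h = 0 :=
      hS'.apply_eq_zero_of_mem_orthogonal ((Submodule.isOrtho_iff_le.mpr hFM).ge hh)
    simpa [hS'h] using decomp h (Submodule.mem_sup_left hh)
  · rw [pow_succ', mul_apply_eq_comp, hTR]
    exact (hP.1 _).1

/-- the approximation identity
`h = Σ_{k=0}^{m} T^k Q R^k h + T^{m+1} R^{m+1} h + Σ_{k=1}^{m} T^k S' R^k h` for `h ∈ M`. -/
theorem stmt_9 {H : Type*} [NormedAddCommGroup H] [InnerProductSpace ℂ H] [CompleteSpace H]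
    (T : H →L[ℂ] H) (hT : ∀ h : H, ‖h‖ ≤ ‖T h‖)
    (M F : Submodule ℂ H) (hMclosed : IsClosed (M : Set H))
    (p : ℕ) (hFdim : Module.finrank ℂ F = p) (hFM : F ≤ Mᗮ)
    (hnear : ∀ f : H, T f ∈ M → f ∈ M ⊔ F)
    (P : H →L[ℂ] H) (hP : IsOrthoProjOn (M ⊓ LinearMap.range (T : H →ₗ[ℂ] H)) P)
    (R : H →L[ℂ] H) (hR : T.comp R = P)
    (Q : H →L[ℂ] H) (hQ : IsOrthoProjOn (M ⊓ (M ⊓ LinearMap.range (T : H →ₗ[ℂ] H))ᗮ) Q)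
    (S' : H →L[ℂ] H) (hS' : IsOrthoProjOn F S') :
    ∀ h ∈ M, ∀ m : ℕ,
      h = (∑ k ∈ Finset.range (m + 1), (T ^ k) (Q ((R ^ k) h)))
        + (T ^ (m + 1)) ((R ^ (m + 1)) h)
        + ∑ k ∈ Finset.Icc 1 m, (T ^ k) (S' ((R ^ k) h)) :=
  stmt_9_general T M F hFM hnear P hP R hR Q hQ S' hS'
end

section
/- Let H be a complex Hilbert space, let T be a bounded operator on H with ‖h‖ ≤ ‖T h‖ for all h ∈ H, and let M be a closed subspace of H that is nearly T⁻¹-invariant with defect p, with defect space F orthogonal to M. Let R be the unique bounded operator on H with T ∘ R = P_{M ∩ T(H)}. Then: (a) for every h ∈ M, R h ∈ M + F; (b) for every h ∈ F, R h = 0; and consequently (c) R(M + F) ⊆ M + F, and R^m h ∈ M + F for every h ∈ M and every m ∈ ℕ. -/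
/-!
Every `R x` lands in `M + F`: `T (R x) = P x` lies in `M`, and near `T⁻¹`-invariance pulls this
back. On `F ⊆ Mᗮ ⊆ (M ∩ T(H))ᗮ` the projection `P` vanishes, hence so does `R`, because `T` is
injective.
-/

theorem IsOrthoProjOn.apply_eq_zero_of_mem_orthogonal_s11 {H : Type*} [NormedAddCommGroup H]
    [InnerProductSpace ℂ H] {L : Submodule ℂ H} {P : H →L[ℂ] H} (hP : IsOrthoProjOn L P)
    {x : H} (hx : x ∈ Lᗮ) : P x = 0 := by
  have hPx : P x ∈ Lᗮ := by simpa using Lᗮ.sub_mem hx (hP.2 x)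
  exact (Submodule.disjoint_def.mp L.orthogonal_disjoint) _ (hP.1 x) hPx

theorem ContinuousLinearMap.injective_of_norm_le_norm_apply {𝕜 E F : Type*} [NormedField 𝕜]
    [NormedAddCommGroup E] [NormedSpace 𝕜 E] [NormedAddCommGroup F] [NormedSpace 𝕜 F]
    (T : E →L[𝕜] F) (hT : ∀ x, ‖x‖ ≤ ‖T x‖) : Function.Injective T :=
  (injective_iff_map_eq_zero T).mpr fun x hx =>
    norm_le_zero_iff.mp ((hT x).trans (by rw [hx, norm_zero]))

theorem stmt_11_general {H : Type*} [NormedAddCommGroup H] [InnerProductSpace ℂ H]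
    (T : H →L[ℂ] H) (hT : ∀ h : H, ‖h‖ ≤ ‖T h‖)
    (M F : Submodule ℂ H) (hFM : F ≤ Mᗮ)
    (hnear : ∀ f : H, T f ∈ M → f ∈ M ⊔ F)
    (P : H →L[ℂ] H) (hP : IsOrthoProjOn (M ⊓ LinearMap.range (T : H →ₗ[ℂ] H)) P)
    (R : H →L[ℂ] H) (hR : T.comp R = P) :
    (∀ h ∈ M, R h ∈ M ⊔ F) ∧
    (∀ h ∈ F, R h = 0) ∧
    (∀ h ∈ M ⊔ F, R h ∈ M ⊔ F) ∧
    (∀ h ∈ M, ∀ m : ℕ, (R ^ m) h ∈ M ⊔ F) := by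
  have hTR (x : H) : T (R x) = P x := congr($hR x)
  have hR_mem (x : H) : R x ∈ M ⊔ F := hnear _ (hTR x ▸ (hP.1 x).1)
  have hR_F (h : H) (hF : h ∈ F) : R h = 0 := by
    refine T.injective_of_norm_le_norm_apply hT ?_
    rw [hTR, map_zero]
    exact hP.apply_eq_zero_of_mem_orthogonal_s11 (Submodule.orthogonal_le inf_le_left (hFM hF))
  refine ⟨fun h _ => hR_mem h, hR_F, fun h _ => hR_mem h, fun h hM m => ?_⟩
  rw [← ContinuousLinearMap.coe_coe, R.toLinearMap_pow]
  exact Module.End.pow_apply_mem_of_forall_mem m (fun x _ => hR_mem x) h (Submodule.mem_sup_left hM)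

/-- properties of the operator `R` with `T ∘ R = P_{M ∩ T(H)}`:
(a) `R(M) ⊆ M + F`, (b) `R` vanishes on `F`, (c) `R(M + F) ⊆ M + F` and
`R^m h ∈ M + F` for every `h ∈ M` and `m ∈ ℕ`. -/
theorem stmt_11 {H : Type*} [NormedAddCommGroup H] [InnerProductSpace ℂ H] [CompleteSpace H]
    (T : H →L[ℂ] H) (hT : ∀ h : H, ‖h‖ ≤ ‖T h‖)
    (M F : Submodule ℂ H) (hMclosed : IsClosed (M : Set H))
    (p : ℕ) (hFdim : Module.finrank ℂ F = p) (hFM : F ≤ Mᗮ)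
    (hnear : ∀ f : H, T f ∈ M → f ∈ M ⊔ F)
    (P : H →L[ℂ] H) (hP : IsOrthoProjOn (M ⊓ LinearMap.range (T : H →ₗ[ℂ] H)) P)
    (R : H →L[ℂ] H) (hR : T.comp R = P) :
    (∀ h ∈ M, R h ∈ M ⊔ F) ∧
    (∀ h ∈ F, R h = 0) ∧
    (∀ h ∈ M ⊔ F, R h ∈ M ⊔ F) ∧
    (∀ h ∈ M, ∀ m : ℕ, (R ^ m) h ∈ M ⊔ F) :=
  stmt_11_general T hT M F hFM hnear P hP R hR
end

section
/- Let H be a complex Hilbert space, let T be a bounded operator on H with ‖h‖ ≤ ‖T h‖ for all h ∈ H, and let M be a closed subspace of H that is nearly T⁻¹-invariant with defect p, with defect space F orthogonal to M. Let R be the unique bounded operator on H with T ∘ R = P_{M ∩ T(H)}, let Q = P_{M ⊖ (M ∩ T(H))}, and let S′ = P_F. Then for every h ∈ M: h = Q h + T R h, and for every integer m ≥ 1: R^m h = Q R^m h + T R^{m+1} h + S′ R^m h. -/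
namespace IsOrthoProjOn

variable {H : Type*} [NormedAddCommGroup H] [InnerProductSpace ℂ H]
  {L : Submodule ℂ H} {P : H →L[ℂ] H}

theorem apply_of_mem (hP : IsOrthoProjOn L P) {x : H} (hx : x ∈ L) : P x = x :=
  (sub_eq_zero.mp <|
    Submodule.disjoint_def.mp L.orthogonal_disjoint _ (L.sub_mem hx (hP.1 x)) (hP.2 x)).symm

theorem apply_of_mem_orthogonal (hP : IsOrthoProjOn L P) {x : H} (hx : x ∈ Lᗮ) : P x = 0 :=
  Submodule.disjoint_def.mp L.orthogonal_disjoint _ (hP.1 x) (by simpa using Lᗮ.sub_mem hx (hP.2 x))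

theorem add_apply_of_mem {N M : Submodule ℂ H} {Q : H →L[ℂ] H} (hNM : N ≤ M)
    (hP : IsOrthoProjOn N P) (hQ : IsOrthoProjOn (M ⊓ Nᗮ) Q) {u : H} (hu : u ∈ M) :
    u = Q u + P u := by
  have hQP : Q (P u) = 0 := hQ.apply_of_mem_orthogonal <|
    Submodule.orthogonal_le inf_le_right (N.le_orthogonal_orthogonal (hP.1 u))
  have hQ_sub : Q (u - P u) = u - P u := hQ.apply_of_mem ⟨M.sub_mem hu (hNM (hP.1 u)), hP.2 u⟩
  rw [map_sub, hQP, sub_zero] at hQ_sub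
  rw [hQ_sub, sub_add_cancel]

theorem add_add_apply_of_mem_sup {N M F : Submodule ℂ H} {Q S : H →L[ℂ] H} (hNM : N ≤ M)
    (hFM : F ≤ Mᗮ) (hP : IsOrthoProjOn N P) (hQ : IsOrthoProjOn (M ⊓ Nᗮ) Q)
    (hS : IsOrthoProjOn F S) {x : H} (hx : x ∈ M ⊔ F) :
    x = Q x + P x + S x := by
  obtain ⟨u, hu, v, hv, rfl⟩ := Submodule.mem_sup.mp hx
  have hPv : P v = 0 := hP.apply_of_mem_orthogonal (Submodule.orthogonal_le hNM (hFM hv))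
  have hQv : Q v = 0 := hQ.apply_of_mem_orthogonal (Submodule.orthogonal_le inf_le_left (hFM hv))
  have hSu : S u = 0 :=
    hS.apply_of_mem_orthogonal (Submodule.orthogonal_le hFM (M.le_orthogonal_orthogonal hu))
  simp only [map_add, hPv, hQv, hSu, hS.apply_of_mem hv]
  nth_rewrite 1 [hP.add_apply_of_mem hNM hQ hu]
  abel

end IsOrthoProjOn

theorem stmt_12_general {H : Type*} [NormedAddCommGroup H] [InnerProductSpace ℂ H]
    (T : H →L[ℂ] H)
    (M F : Submodule ℂ H)
    (hFM : F ≤ Mᗮ)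
    (hnear : ∀ f : H, T f ∈ M → f ∈ M ⊔ F)
    (P : H →L[ℂ] H) (hP : IsOrthoProjOn (M ⊓ LinearMap.range (T : H →ₗ[ℂ] H)) P)
    (R : H →L[ℂ] H) (hR : T.comp R = P)
    (Q : H →L[ℂ] H) (hQ : IsOrthoProjOn (M ⊓ (M ⊓ LinearMap.range (T : H →ₗ[ℂ] H))ᗮ) Q)
    (S' : H →L[ℂ] H) (hS' : IsOrthoProjOn F S') :
    ∀ h ∈ M,
      h = Q h + T (R h) ∧
      ∀ m : ℕ, 1 ≤ m →
        (R ^ m) h = Q ((R ^ m) h) + T ((R ^ (m + 1)) h) + S' ((R ^ m) h) := by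
  have hTR (x : H) : T (R x) = P x := DFunLike.congr_fun hR x
  have hNM : M ⊓ LinearMap.range (T : H →ₗ[ℂ] H) ≤ M := inf_le_left
  have pow_succ_apply (n : ℕ) (x : H) : (R ^ (n + 1)) x = R ((R ^ n) x) := by
    rw [pow_succ']
    rfl
  intro h hh
  refine ⟨by rw [hTR]; exact hP.add_apply_of_mem hNM hQ hh, fun m hm => ?_⟩
  obtain ⟨n, rfl⟩ := Nat.exists_eq_add_of_le' hm
  have hmem : (R ^ (n + 1)) h ∈ M ⊔ F :=
    hnear _ (by rw [pow_succ_apply, hTR]; exact hNM (hP.1 _))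
  rw [pow_succ_apply (n + 1), hTR]
  exact hP.add_add_apply_of_mem_sup hNM hFM hQ hS' hmem

/-- for `h ∈ M`, `h = Q h + T R h` and, for every `m ≥ 1`,
`R^m h = Q R^m h + T R^{m+1} h + S' R^m h`. -/
theorem stmt_12 {H : Type*} [NormedAddCommGroup H] [InnerProductSpace ℂ H] [CompleteSpace H]
    (T : H →L[ℂ] H) (hT : ∀ h : H, ‖h‖ ≤ ‖T h‖)
    (M F : Submodule ℂ H) (hMclosed : IsClosed (M : Set H))
    (p : ℕ) (hFdim : Module.finrank ℂ F = p) (hFM : F ≤ Mᗮ)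
    (hnear : ∀ f : H, T f ∈ M → f ∈ M ⊔ F)
    (P : H →L[ℂ] H) (hP : IsOrthoProjOn (M ⊓ LinearMap.range (T : H →ₗ[ℂ] H)) P)
    (R : H →L[ℂ] H) (hR : T.comp R = P)
    (Q : H →L[ℂ] H) (hQ : IsOrthoProjOn (M ⊓ (M ⊓ LinearMap.range (T : H →ₗ[ℂ] H))ᗮ) Q)
    (S' : H →L[ℂ] H) (hS' : IsOrthoProjOn F S') :
    ∀ h ∈ M,
      h = Q h + T (R h) ∧
      ∀ m : ℕ, 1 ≤ m →
        (R ^ m) h = Q ((R ^ m) h) + T ((R ^ (m + 1)) h) + S' ((R ^ m) h) :=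
  stmt_12_general T M F hFM hnear P hP R hR Q hQ S' hS'
end

section
/- (Factorization Theorem, case M ⊄ M_u(H).) Let d ≥ 1, let W be an open subset of ℂ^d, and let (H, j, u, T, γ) satisfy: H is a complex Hilbert space; j is a linear map from H to functions ℂ^d → ℂ such that each j h is analytic on W, and j is injective on W (if j h vanishes identically on W then h = 0); for each w ∈ W the evaluation h ↦ (j h)(w) is a continuous linear functional on H; u : ℂ^d → ℂ is analytic on W; T is a bounded linear operator on H with (j(T h))(w) = u(w)·(j h)(w) for all h ∈ H and w ∈ W; and γ > 0 satisfies γ‖h‖ ≤ ‖T h‖ for all h ∈ H. Set Ω := { w ∈ W : |u(w)| < γ }, and assume: every function f : ℂ^d → ℂ such that for each n ∈ ℕ there exists hₙ ∈ H with f(w) = u(w)ⁿ · (j hₙ)(w) for all w ∈ Ω vanishes identically on Ω. Let M ⊆ H be a closed subspace that is nearly T⁻¹-invariant with defect p, with defect space F orthogonal to M; let (e_j)_{j=1}^{p} be an orthonormal basis of F and let (g_i)_{i∈I} be an orthonormal basis of M ⊖ (M ∩ T(H)), indexed by a set I. Then for every h ∈ M there exist complex numbers (c_{i,k})_{i∈I,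 k∈ℕ} and (b_{j,k})_{1≤j≤p, k∈ℕ} such that Σ_{i∈I} Σ_{k∈ℕ} |c_{i,k}|² + Σ_{j=1}^{p} Σ_{k∈ℕ} |b_{j,k}|² ≤ ‖h‖², and for every w ∈ Ω: (j h)(w) = Σ_{i∈I} (j g_i)(w) · ( Σ_{k=0}^{∞} c_{i,k} (u(w)/γ)^k ) + γ⁻¹ u(w) · Σ_{j=1}^{p} (j e_j)(w) · ( Σ_{k=0}^{∞} b_{j,k} (u(w)/γ)^k ), where each inner power series converges absolutely (since |u(w)| < γ and the coefficients are square-summable) and the sum over i ∈ I converges absolutely. -/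
/-!
Put `N = M ⊓ range T` and `G = M ⊓ Nᗮ`. Since `T` is bounded below, `N` is closed, so every
`x ∈ M` splits orthogonally as `x = s + T f` with `s ∈ G`; near invariance then splits
`f = x' + φ` orthogonally with `x' ∈ M`, `φ ∈ F`. Iterating from `x₀ = h` and using
`γ ‖f‖ ≤ ‖T f‖` gives `‖sₙ‖² + γ² ‖φₙ‖² + γ² ‖xₙ₊₁‖² ≤ ‖xₙ‖²`, so the rescaled pieces
`γⁿ sₙ` and `γⁿ⁺¹ φₙ` have total energy at most `‖h‖²`; their coordinates in the orthonormal
families `g` and `e` are the coefficients `c` and `b`. Evaluation at `w` turns `T` into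
multiplication by `u w`, and the identity `J xₙ = J sₙ + u w (J xₙ₊₁ + J φₙ)` at `w`
telescopes into power series in `u w / γ`; the remainder `(u w)ⁿ (J xₙ) w` tends to zero since `γⁿ ‖xₙ‖ ≤ ‖h‖` and
`‖u w‖ < γ`.
-/

open scoped InnerProductSpace
open Finset Filter Topology Submodule

section Dissipation

theorem pow_mul_add_sum_range_le_of_mul_succ_add_le {q : ℝ} (hq : 0 ≤ q) {a d : ℕ → ℝ}
    (h : ∀ n, q * a (n + 1) + d n ≤ a n) (n : ℕ) :
    q ^ n * a n + ∑ k ∈ range n, q ^ k * d k ≤ a 0 := by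
  induction n with
  | zero => simp
  | succ n ih =>
    calc q ^ (n + 1) * a (n + 1) + ∑ k ∈ range (n + 1), q ^ k * d k
        = q ^ n * (q * a (n + 1) + d n) + ∑ k ∈ range n, q ^ k * d k := by
          rw [sum_range_succ]; ring
      _ ≤ q ^ n * a n + ∑ k ∈ range n, q ^ k * d k := by gcongr; exact h n
      _ ≤ a 0 := ih

variable {q : ℝ} {a d : ℕ → ℝ}

theorem summable_pow_mul_of_mul_succ_add_le (hq : 0 ≤ q) (ha : ∀ n, 0 ≤ a n) (hd : ∀ n, 0 ≤ d n)
    (h : ∀ n, q * a (n + 1) + d n ≤ a n) : Summable fun k => q ^ k * d k :=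
  summable_of_sum_range_le (fun k => mul_nonneg (pow_nonneg hq k) (hd k)) fun n =>
    (le_add_of_nonneg_left (mul_nonneg (pow_nonneg hq n) (ha n))).trans
      (pow_mul_add_sum_range_le_of_mul_succ_add_le hq h n)

theorem tsum_pow_mul_le_of_mul_succ_add_le (hq : 0 ≤ q) (ha : ∀ n, 0 ≤ a n) (hd : ∀ n, 0 ≤ d n)
    (h : ∀ n, q * a (n + 1) + d n ≤ a n) : ∑' k, q ^ k * d k ≤ a 0 :=
  (summable_pow_mul_of_mul_succ_add_le hq ha hd h).tsum_le_of_sum_range_le fun n =>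
    (le_add_of_nonneg_left (mul_nonneg (pow_nonneg hq n) (ha n))).trans
      (pow_mul_add_sum_range_le_of_mul_succ_add_le hq h n)

theorem pow_mul_le_of_mul_succ_add_le (hq : 0 ≤ q) (hd : ∀ n, 0 ≤ d n)
    (h : ∀ n, q * a (n + 1) + d n ≤ a n) (n : ℕ) : q ^ n * a n ≤ a 0 :=
  (le_add_of_nonneg_right (sum_nonneg fun k _ => mul_nonneg (pow_nonneg hq k) (hd k))).trans
    (pow_mul_add_sum_range_le_of_mul_succ_add_le hq h n)

end Dissipation

section Geometric

variable {𝕜 E : Type*} [NormedField 𝕜] [SeminormedAddCommGroup E] [NormedSpace 𝕜 E]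
  {t : 𝕜} {C : ℝ}

theorem summable_norm_pow_smul_of_norm_le (ht : ‖t‖ < 1) {y : ℕ → E} (hy : ∀ k, ‖y k‖ ≤ C) :
    Summable fun k => ‖t ^ k • y k‖ := by
  refine .of_nonneg_of_le (fun _ => norm_nonneg _) (fun k => ?_)
    ((summable_geometric_of_lt_one (norm_nonneg t) ht).mul_left C)
  rw [norm_smul, norm_pow, mul_comm]
  exact mul_le_mul_of_nonneg_right (hy k) (pow_nonneg (norm_nonneg t) k)

theorem summable_norm_mul_pow_of_norm_le (ht : ‖t‖ < 1) {b : ℕ → 𝕜} (hb : ∀ k, ‖b k‖ ≤ C) :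
    Summable fun k => ‖b k * t ^ k‖ := by
  simpa only [smul_eq_mul, mul_comm] using summable_norm_pow_smul_of_norm_le ht hb

theorem tendsto_pow_smul_of_norm_le (ht : ‖t‖ < 1) {y : ℕ → E} (hy : ∀ k, ‖y k‖ ≤ C) :
    Tendsto (fun k => t ^ k • y k) atTop (𝓝 0) :=
  tendsto_zero_iff_norm_tendsto_zero.2
    (summable_norm_pow_smul_of_norm_le ht hy).tendsto_atTop_zero

theorem eq_tsum_mul_pow_add_mul_tsum_mul_pow [CompleteSpace 𝕜] (ht : ‖t‖ < 1) {a b c : ℕ → 𝕜}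
    (ha : ∀ n, ‖a n‖ ≤ C) (hb : ∀ n, ‖b n‖ ≤ C) (hc : ∀ n, ‖c n‖ ≤ C)
    (hrec : ∀ n, a n = b n + t * (a (n + 1) + c n)) :
    a 0 = ∑' k, b k * t ^ k + t * ∑' k, c k * t ^ k := by
  have hbs := (summable_norm_mul_pow_of_norm_le ht hb).of_norm
  have hcs := (summable_norm_mul_pow_of_norm_le ht hc).of_norm
  have hpartial : ∀ n, ∑ k ∈ range n, (b k * t ^ k + t * (c k * t ^ k)) + a n * t ^ n = a 0 := by
    intro n
    induction n with
    | zero => simp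
    | succ n ih => rw [sum_range_succ, ← ih, hrec n]; ring
  rw [← tsum_mul_left, ← hbs.tsum_add (hcs.mul_left t)]
  refine tendsto_nhds_unique ?_ ((hbs.add (hcs.mul_left t)).hasSum.tendsto_sum_nat)
  have hrem : Tendsto (fun n => a n * t ^ n) atTop (𝓝 0) := by
    simpa only [smul_eq_mul, mul_comm] using tendsto_pow_smul_of_norm_le ht ha
  simpa only [sub_zero] using ((tendsto_const_nhds (x := a 0)).sub hrem).congr fun n =>
    (eq_sub_of_add_eq (hpartial n)).symm

end Geometric

theorem ContinuousLinearMap.isClosed_range_of_mul_norm_le {𝕜 E F : Type*}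
    [NontriviallyNormedField 𝕜] [NormedAddCommGroup E] [NormedSpace 𝕜 E] [CompleteSpace E]
    [NormedAddCommGroup F] [NormedSpace 𝕜 F] {T : E →L[𝕜] F}
    {γ : ℝ} (hγ : 0 < γ) (hT : ∀ x, γ * ‖x‖ ≤ ‖T x‖) : IsClosed (Set.range T) := by
  refine (T.antilipschitz_of_bound (K := ⟨γ⁻¹, inv_nonneg.2 hγ.le⟩) fun x => ?_).isClosed_range
    T.uniformContinuous
  show ‖x‖ ≤ γ⁻¹ * ‖T x‖
  rw [← div_eq_inv_mul, le_div_iff₀' hγ]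
  exact hT x

theorem Submodule.tsum_mem_of_isClosed {R M : Type*} [Semiring R] [AddCommMonoid M]
    [TopologicalSpace M] [Module R M] {K : Submodule R M} (hK : IsClosed (K : Set M))
    {y : ℕ → M} (hy : ∀ k, y k ∈ K) : ∑' k, y k ∈ K := by
  by_cases hs : Summable y
  · exact hK.mem_of_tendsto hs.hasSum.tendsto_sum_nat (.of_forall fun n => sum_mem fun k _ => hy k)
  · rw [tsum_eq_zero_of_not_summable hs]; exact K.zero_mem

section InnerProduct

variable {𝕜 E ι : Type*} [RCLike 𝕜] [NormedAddCommGroup E] [InnerProductSpace 𝕜 E]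
  {g : ι → E}

theorem norm_add_sq_of_inner_eq_zero {x y : E} (hxy : ⟪x, y⟫_𝕜 = 0) :
    ‖x + y‖ ^ 2 = ‖x‖ ^ 2 + ‖y‖ ^ 2 := by
  simpa only [sq] using norm_add_sq_eq_norm_sq_add_norm_sq_of_inner_eq_zero x y hxy

theorem norm_sq_ofReal_pow_smul {γ : ℝ} (hγ : 0 ≤ γ) (n : ℕ) (v : E) :
    ‖(γ : 𝕜) ^ n • v‖ ^ 2 = (γ ^ 2) ^ n * ‖v‖ ^ 2 := by
  rw [norm_smul, norm_pow, RCLike.norm_ofReal, abs_of_nonneg hγ]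
  ring

theorem Orthonormal.hasSum_inner_smul [CompleteSpace E] (hg : Orthonormal 𝕜 g) {v : E}
    (hv : v ∈ (span 𝕜 (Set.range g)).topologicalClosure) :
    HasSum (fun i => ⟪g i, v⟫_𝕜 • g i) v := by
  classical
  set K := (span 𝕜 (Set.range g)).topologicalClosure
  have : CompleteSpace K := (isClosed_topologicalClosure _).completeSpace_coe
  let gK : ι → K := fun i => ⟨g i, le_topologicalClosure _ (subset_span ⟨i, rfl⟩)⟩
  have hgK : Orthonormal 𝕜 gK := by
    rw [orthonormal_iff_ite] at hg ⊢
    exact hg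
  have hdense : ⊤ ≤ (span 𝕜 (Set.range gK)).topologicalClosure := by
    rintro x -
    have hmap : (span 𝕜 (Set.range gK)).map K.subtype = span 𝕜 (Set.range g) := by
      rw [Submodule.map_span, ← Set.range_comp]
      rfl
    refine closure_subtype.2 ?_
    show (x : E) ∈ closure (((span 𝕜 (Set.range gK)).map K.subtype : Submodule 𝕜 E) : Set E)
    rw [hmap]
    exact x.2
  let b := HilbertBasis.mk hgK hdense
  have hb : ⇑b = gK := HilbertBasis.coe_mk hgK hdense
  simpa [b.repr_apply_apply, hb, gK] using (b.hasSum_repr ⟨v, hv⟩).mapL K.subtypeL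

theorem Orthonormal.norm_inner_le (hg : Orthonormal 𝕜 g) (i : ι) (v : E) :
    ‖⟪g i, v⟫_𝕜‖ ≤ ‖v‖ := by
  simpa [hg.1 i] using norm_inner_le_norm (𝕜 := 𝕜) (g i) v

theorem Orthonormal.summable_norm_apply_mul_inner [CompleteSpace E] (hg : Orthonormal 𝕜 g)
    (L : E →L[𝕜] 𝕜) (v : E) : Summable fun i => ‖L (g i) * ⟪g i, v⟫_𝕜‖ := by
  set r := (InnerProductSpace.toDual 𝕜 E).symm L
  have hr : ∀ i, ‖L (g i)‖ ^ 2 = ‖⟪g i, r⟫_𝕜‖ ^ 2 := fun i => by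
    rw [← InnerProductSpace.toDual_symm_apply, norm_inner_symm]
  refine .of_nonneg_of_le (fun _ => norm_nonneg _) (fun i => ?_)
    (((hg.inner_products_summable r).add (hg.inner_products_summable v)).mul_left (1 / 2))
  rw [norm_mul, ← hr]
  nlinarith [sq_nonneg (‖L (g i)‖ - ‖⟪g i, v⟫_𝕜‖)]

theorem ContinuousLinearMap.map_tsum_pow_smul (L : E →L[𝕜] 𝕜) {t : 𝕜} {y : ℕ → E}
    (hs : Summable fun k => t ^ k • y k) : L (∑' k, t ^ k • y k) = ∑' k, L (y k) * t ^ k := by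
  simp only [L.map_tsum hs, map_smul, smul_eq_mul, mul_comm]

theorem Orthonormal.summable_prod_norm_inner_sq (hg : Orthonormal 𝕜 g) {y : ℕ → E}
    (hy : Summable fun k => ‖y k‖ ^ 2) :
    Summable fun ik : ι × ℕ => ‖⟪g ik.1, y ik.2⟫_𝕜‖ ^ 2 := by
  rw [← (Equiv.prodComm ℕ ι).summable_iff]
  refine (summable_prod_of_nonneg fun _ => sq_nonneg _).2
    ⟨fun k => hg.inner_products_summable (y k), ?_⟩
  exact hy.of_nonneg_of_le (fun _ => tsum_nonneg fun _ => sq_nonneg _)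
    fun k => hg.tsum_inner_products_le (y k)

theorem Orthonormal.tsum_prod_norm_inner_sq_le (hg : Orthonormal 𝕜 g) {y : ℕ → E}
    (hy : Summable fun k => ‖y k‖ ^ 2) :
    ∑' ik : ι × ℕ, ‖⟪g ik.1, y ik.2⟫_𝕜‖ ^ 2 ≤ ∑' k, ‖y k‖ ^ 2 := by
  have hs := hg.summable_prod_norm_inner_sq hy
  rw [← (Equiv.prodComm ℕ ι).summable_iff] at hs
  rw [← (Equiv.prodComm ℕ ι).tsum_eq]
  simp only [Function.comp_def, Equiv.prodComm_apply, Prod.fst_swap, Prod.snd_swap] at hs ⊢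
  rw [hs.tsum_prod]
  exact hs.prod.tsum_le_tsum (fun k => hg.tsum_inner_products_le (y k)) hy

section Expansion

variable [CompleteSpace E] {t : 𝕜} {y : ℕ → E}

theorem Orthonormal.summable_norm_apply_mul_tsum_inner_mul_pow (hg : Orthonormal 𝕜 g)
    (L : E →L[𝕜] 𝕜) (hs : Summable fun k => t ^ k • y k) :
    Summable fun i => ‖L (g i) * ∑' k, ⟪g i, y k⟫_𝕜 * t ^ k‖ := by
  have hinner : ∀ x, ⟪x, ∑' k, t ^ k • y k⟫_𝕜 = ∑' k, ⟪x, y k⟫_𝕜 * t ^ k :=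
    fun x => (innerSL 𝕜 x).map_tsum_pow_smul hs
  simpa only [hinner] using hg.summable_norm_apply_mul_inner L (∑' k, t ^ k • y k)

theorem Orthonormal.hasSum_apply_mul_tsum_inner_mul_pow (hg : Orthonormal 𝕜 g) (L : E →L[𝕜] 𝕜)
    (hy : ∀ k, y k ∈ (span 𝕜 (Set.range g)).topologicalClosure)
    (hs : Summable fun k => t ^ k • y k) :
    HasSum (fun i => L (g i) * ∑' k, ⟪g i, y k⟫_𝕜 * t ^ k) (∑' k, L (y k) * t ^ k) := by
  have hv := tsum_mem_of_isClosed (isClosed_topologicalClosure _) fun k => smul_mem _ (t ^ k) (hy k)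
  have hinner : ∀ x, ⟪x, ∑' k, t ^ k • y k⟫_𝕜 = ∑' k, ⟪x, y k⟫_𝕜 * t ^ k :=
    fun x => (innerSL 𝕜 x).map_tsum_pow_smul hs
  rw [← L.map_tsum_pow_smul hs]
  convert (hg.hasSum_inner_smul hv).mapL L using 2 with i
  rw [map_smul, smul_eq_mul, hinner, mul_comm]

end Expansion

end InnerProduct

section Factorization

variable {𝕜 H : Type*} [RCLike 𝕜] [NormedAddCommGroup H] [InnerProductSpace 𝕜 H]

theorem exists_mem_inf_orthogonal_add_apply [CompleteSpace H] {M : Submodule 𝕜 H}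
    (hM : IsClosed (M : Set H)) {T : H →L[𝕜] H} (hT : IsClosed (Set.range T)) {x : H}
    (hx : x ∈ M) :
    ∃ s ∈ M ⊓ (M ⊓ LinearMap.range (T : H →ₗ[𝕜] H))ᗮ, ∃ f, T f ∈ M ∧ x = s + T f ∧
      ‖x‖ ^ 2 = ‖s‖ ^ 2 + ‖T f‖ ^ 2 := by
  set N := M ⊓ LinearMap.range (T : H →ₗ[𝕜] H)
  have hN : IsClosed (N : Set H) := by
    rw [coe_inf, LinearMap.coe_range]
    exact hM.inter hT
  have : CompleteSpace N := hN.completeSpace_coe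
  obtain ⟨f, hf⟩ : ∃ f, T f = N.starProjection x := (N.starProjection_apply_mem x).2
  have hTf : T f ∈ N := hf ▸ N.starProjection_apply_mem x
  have hs : x - T f ∈ Nᗮ := hf ▸ N.sub_starProjection_mem_orthogonal x
  refine ⟨x - T f, ⟨M.sub_mem hx hTf.1, hs⟩, f, hTf.1, by abel, ?_⟩
  conv_lhs => rw [← sub_add_cancel x (T f)]
  exact norm_add_sq_of_inner_eq_zero (N.inner_left_of_mem_orthogonal hTf hs)

theorem Submodule.exists_add_of_mem_sup_of_le_orthogonal {M F : Submodule 𝕜 H} (hFM : F ≤ Mᗮ)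
    {f : H} (hf : f ∈ M ⊔ F) :
    ∃ x ∈ M, ∃ φ ∈ F, f = x + φ ∧ ‖f‖ ^ 2 = ‖x‖ ^ 2 + ‖φ‖ ^ 2 := by
  obtain ⟨x, hx, φ, hφ, rfl⟩ := mem_sup.1 hf
  exact ⟨x, hx, φ, hφ, rfl,
    norm_add_sq_of_inner_eq_zero (M.inner_right_of_mem_orthogonal hx (hFM hφ))⟩

structure FactorizationDescent (T : H →L[𝕜] H) (G F : Submodule 𝕜 H) (h : H) where
  x : ℕ → H
  s : ℕ → H
  f : ℕ → H
  φ : ℕ → H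
  x_zero : x 0 = h
  s_mem : ∀ n, s n ∈ G
  φ_mem : ∀ n, φ n ∈ F
  x_eq : ∀ n, x n = s n + T (f n)
  f_eq : ∀ n, f n = x (n + 1) + φ n
  norm_sq_x : ∀ n, ‖x n‖ ^ 2 = ‖s n‖ ^ 2 + ‖T (f n)‖ ^ 2
  norm_sq_f : ∀ n, ‖f n‖ ^ 2 = ‖x (n + 1)‖ ^ 2 + ‖φ n‖ ^ 2

theorem exists_factorizationDescent [CompleteSpace H] {M F : Submodule 𝕜 H}
    (hM : IsClosed (M : Set H)) {T : H →L[𝕜] H} (hT : IsClosed (Set.range T)) (hFM : F ≤ Mᗮ)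
    (hnear : ∀ f, T f ∈ M → f ∈ M ⊔ F) {h : H} (hh : h ∈ M) :
    Nonempty (FactorizationDescent T (M ⊓ (M ⊓ LinearMap.range (T : H →ₗ[𝕜] H))ᗮ) F h) := by
  have step : ∀ x : M, ∃ x' : M, ∃ s f φ : H,
      s ∈ M ⊓ (M ⊓ LinearMap.range (T : H →ₗ[𝕜] H))ᗮ ∧ φ ∈ F ∧ (x : H) = s + T f ∧
      f = x' + φ ∧ ‖(x : H)‖ ^ 2 = ‖s‖ ^ 2 + ‖T f‖ ^ 2 ∧ ‖f‖ ^ 2 = ‖(x' : H)‖ ^ 2 + ‖φ‖ ^ 2 := by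
    rintro ⟨x, hx⟩
    obtain ⟨s, hs, f, hfM, hxf, hnx⟩ := exists_mem_inf_orthogonal_add_apply hM hT hx
    obtain ⟨x', hx', φ, hφ, hf, hnf⟩ := exists_add_of_mem_sup_of_le_orthogonal hFM (hnear f hfM)
    exact ⟨⟨x', hx'⟩, s, f, φ, hs, hφ, hxf, hf, hnx, hnf⟩
  choose next s f φ hs hφ hx hf hnx hnf using step
  let X : ℕ → M := fun n => next^[n] ⟨h, hh⟩
  have hX : ∀ n, X (n + 1) = next (X n) := fun n => Function.iterate_succ_apply' _ _ _
  exact ⟨{ x := fun n => X n, s := fun n => s (X n), f := fun n => f (X n), φ := fun n => φ (X n)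
           x_zero := rfl, s_mem := fun n => hs _, φ_mem := fun n => hφ _, x_eq := fun n => hx _
           f_eq := fun n => by rw [hX]; exact hf _, norm_sq_x := fun n => hnx _
           norm_sq_f := fun n => by rw [hX]; exact hnf _ }⟩

namespace FactorizationDescent

variable {T : H →L[𝕜] H} {G F : Submodule 𝕜 H} {h : H} (D : FactorizationDescent T G F h)
  {γ : ℝ}

def scaledX (γ : ℝ) (n : ℕ) : H := (γ : 𝕜) ^ n • D.x n

def scaledS (γ : ℝ) (n : ℕ) : H := (γ : 𝕜) ^ n • D.s n

def scaledφ (γ : ℝ) (n : ℕ) : H := (γ : 𝕜) ^ (n + 1) • D.φ n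

theorem mul_norm_sq_succ_add_le (hγ : 0 ≤ γ) (hT : ∀ y, γ * ‖y‖ ≤ ‖T y‖) (n : ℕ) :
    γ ^ 2 * ‖D.x (n + 1)‖ ^ 2 + (‖D.s n‖ ^ 2 + γ ^ 2 * ‖D.φ n‖ ^ 2) ≤ ‖D.x n‖ ^ 2 := by
  have := pow_le_pow_left₀ (by positivity) (hT (D.f n)) 2
  rw [mul_pow, D.norm_sq_f] at this
  rw [D.norm_sq_x n]
  linarith

def energy (γ : ℝ) (n : ℕ) : ℝ := ‖D.scaledS γ n‖ ^ 2 + ‖D.scaledφ γ n‖ ^ 2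

theorem energy_eq (hγ : 0 ≤ γ) (n : ℕ) :
    D.energy γ n = (γ ^ 2) ^ n * (‖D.s n‖ ^ 2 + γ ^ 2 * ‖D.φ n‖ ^ 2) := by
  rw [energy, scaledS, scaledφ, norm_sq_ofReal_pow_smul hγ, norm_sq_ofReal_pow_smul hγ]
  ring

theorem summable_energy (hγ : 0 ≤ γ) (hT : ∀ y, γ * ‖y‖ ≤ ‖T y‖) : Summable (D.energy γ) := by
  simpa only [← D.energy_eq hγ] using summable_pow_mul_of_mul_succ_add_le (sq_nonneg γ)
    (fun n => sq_nonneg ‖D.x n‖) (fun n => by positivity) (D.mul_norm_sq_succ_add_le hγ hT)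

theorem tsum_energy_le (hγ : 0 ≤ γ) (hT : ∀ y, γ * ‖y‖ ≤ ‖T y‖) :
    ∑' n, D.energy γ n ≤ ‖h‖ ^ 2 := by
  simpa only [← D.energy_eq hγ, D.x_zero] using tsum_pow_mul_le_of_mul_succ_add_le
    (sq_nonneg γ) (fun n => sq_nonneg ‖D.x n‖) (fun n => by positivity)
    (D.mul_norm_sq_succ_add_le hγ hT)

theorem energy_le (hγ : 0 ≤ γ) (hT : ∀ y, γ * ‖y‖ ≤ ‖T y‖) (n : ℕ) : D.energy γ n ≤ ‖h‖ ^ 2 :=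
  ((D.summable_energy hγ hT).le_tsum n fun _ _ => add_nonneg (sq_nonneg _) (sq_nonneg _)).trans
    (D.tsum_energy_le hγ hT)

theorem summable_norm_sq_scaledS (hγ : 0 ≤ γ) (hT : ∀ y, γ * ‖y‖ ≤ ‖T y‖) :
    Summable fun n => ‖D.scaledS γ n‖ ^ 2 :=
  (D.summable_energy hγ hT).of_nonneg_of_le (fun _ => sq_nonneg _)
    fun _ => le_add_of_nonneg_right (sq_nonneg _)

theorem summable_norm_sq_scaledφ (hγ : 0 ≤ γ) (hT : ∀ y, γ * ‖y‖ ≤ ‖T y‖) :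
    Summable fun n => ‖D.scaledφ γ n‖ ^ 2 :=
  (D.summable_energy hγ hT).of_nonneg_of_le (fun _ => sq_nonneg _)
    fun _ => le_add_of_nonneg_left (sq_nonneg _)

theorem tsum_norm_sq_scaledS_add_tsum_norm_sq_scaledφ_le (hγ : 0 ≤ γ)
    (hT : ∀ y, γ * ‖y‖ ≤ ‖T y‖) :
    ∑' n, ‖D.scaledS γ n‖ ^ 2 + ∑' n, ‖D.scaledφ γ n‖ ^ 2 ≤ ‖h‖ ^ 2 := by
  rw [← (D.summable_norm_sq_scaledS hγ hT).tsum_add (D.summable_norm_sq_scaledφ hγ hT)]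
  exact D.tsum_energy_le hγ hT

theorem norm_scaledS_le (hγ : 0 ≤ γ) (hT : ∀ y, γ * ‖y‖ ≤ ‖T y‖) (n : ℕ) :
    ‖D.scaledS γ n‖ ≤ ‖h‖ :=
  (pow_le_pow_iff_left₀ (norm_nonneg _) (norm_nonneg _) two_ne_zero).1 <|
    (le_add_of_nonneg_right (sq_nonneg _)).trans (D.energy_le hγ hT n)

theorem norm_scaledφ_le (hγ : 0 ≤ γ) (hT : ∀ y, γ * ‖y‖ ≤ ‖T y‖) (n : ℕ) :
    ‖D.scaledφ γ n‖ ≤ ‖h‖ :=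
  (pow_le_pow_iff_left₀ (norm_nonneg _) (norm_nonneg _) two_ne_zero).1 <|
    (le_add_of_nonneg_left (sq_nonneg _)).trans (D.energy_le hγ hT n)

theorem norm_scaledX_le (hγ : 0 ≤ γ) (hT : ∀ y, γ * ‖y‖ ≤ ‖T y‖) (n : ℕ) :
    ‖D.scaledX γ n‖ ≤ ‖h‖ := by
  refine (pow_le_pow_iff_left₀ (norm_nonneg _) (norm_nonneg _) two_ne_zero).1 ?_
  simpa only [scaledX, norm_sq_ofReal_pow_smul hγ, D.x_zero] using
    pow_mul_le_of_mul_succ_add_le (sq_nonneg γ) (a := fun n => ‖D.x n‖ ^ 2)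
      (fun n => by positivity) (D.mul_norm_sq_succ_add_le hγ hT) n

theorem apply_scaledX_eq (L : H →L[𝕜] 𝕜) {z : 𝕜} (hL : ∀ y, L (T y) = z * L y) (hγ : γ ≠ 0)
    (n : ℕ) : L (D.scaledX γ n) =
      L (D.scaledS γ n) + z / γ * (L (D.scaledX γ (n + 1)) + L (D.scaledφ γ n)) := by
  simp only [scaledX, scaledS, scaledφ, map_smul, smul_eq_mul, D.x_eq n, map_add, hL, D.f_eq n]
  have : (γ : 𝕜) ≠ 0 := RCLike.ofReal_ne_zero.2 hγ
  field_simp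
  ring

theorem apply_eq_tsum (L : H →L[𝕜] 𝕜) {z : 𝕜} (hL : ∀ y, L (T y) = z * L y) (hγ : 0 < γ)
    (hT : ∀ y, γ * ‖y‖ ≤ ‖T y‖) (hz : ‖z‖ < γ) :
    L h = ∑' k, L (D.scaledS γ k) * (z / γ) ^ k +
      z / γ * ∑' k, L (D.scaledφ γ k) * (z / γ) ^ k := by
  have ht : ‖z / γ‖ < 1 := by
    rw [norm_div, RCLike.norm_ofReal, abs_of_pos hγ, div_lt_one hγ]
    exact hz
  have hbound : ∀ {v : ℕ → H}, (∀ n, ‖v n‖ ≤ ‖h‖) → ∀ n, ‖L (v n)‖ ≤ ‖L‖ * ‖h‖ := fun hv n =>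
    (L.le_opNorm _).trans (mul_le_mul_of_nonneg_left (hv n) (norm_nonneg L))
  simpa only [scaledX, pow_zero, one_smul, D.x_zero] using
    eq_tsum_mul_pow_add_mul_tsum_mul_pow ht (hbound (D.norm_scaledX_le hγ.le hT))
      (hbound (D.norm_scaledS_le hγ.le hT)) (hbound (D.norm_scaledφ_le hγ.le hT))
      (D.apply_scaledX_eq L hL hγ.ne')

end FactorizationDescent

end Factorization

theorem stmt_14_general {d : ℕ} (W : Set (Fin d → ℂ))
    {H : Type*} [NormedAddCommGroup H] [InnerProductSpace ℂ H] [CompleteSpace H]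
    (J : H →ₗ[ℂ] ((Fin d → ℂ) → ℂ))
    (hJ_eval : ∀ w ∈ W, Continuous fun h : H => J h w)
    (u : (Fin d → ℂ) → ℂ)
    (T : H →L[ℂ] H) (hTmul : ∀ (h : H), ∀ w ∈ W, J (T h) w = u w * J h w)
    (γ : ℝ) (hγ : 0 < γ) (hlow : ∀ h : H, γ * ‖h‖ ≤ ‖T h‖)
    (Ω : Set (Fin d → ℂ)) (hΩ : Ω = {w ∈ W | ‖u w‖ < γ})
    (M F : Submodule ℂ H) (hMclosed : IsClosed (M : Set H))
    (p : ℕ) (hFM : F ≤ Mᗮ)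
    (hnear : ∀ f : H, T f ∈ M → f ∈ M ⊔ F)
    (e : Fin p → H) (he_on : Orthonormal ℂ e)
    (he_span : Submodule.span ℂ (Set.range e) = F)
    {I : Type*} (g : I → H) (hg_on : Orthonormal ℂ g)
    (hg_span : (Submodule.span ℂ (Set.range g)).topologicalClosure
      = M ⊓ (M ⊓ LinearMap.range (T : H →ₗ[ℂ] H))ᗮ) :
    ∀ h ∈ M, ∃ (c : I → ℕ → ℂ) (b : Fin p → ℕ → ℂ),
      Summable (fun ik : I × ℕ => ‖c ik.1 ik.2‖ ^ 2) ∧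
      Summable (fun jk : Fin p × ℕ => ‖b jk.1 jk.2‖ ^ 2) ∧
      (∑' ik : I × ℕ, ‖c ik.1 ik.2‖ ^ 2) + (∑' jk : Fin p × ℕ, ‖b jk.1 jk.2‖ ^ 2)
        ≤ ‖h‖ ^ 2 ∧
      ∀ w ∈ Ω,
        (∀ i : I, Summable fun k : ℕ => ‖c i k * (u w / (γ : ℂ)) ^ k‖) ∧
        (∀ j : Fin p, Summable fun k : ℕ => ‖b j k * (u w / (γ : ℂ)) ^ k‖) ∧
        Summable (fun i : I =>
          ‖J (g i) w * ∑' k : ℕ, c i k * (u w / (γ : ℂ)) ^ k‖) ∧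
        J h w = (∑' i : I, J (g i) w * ∑' k : ℕ, c i k * (u w / (γ : ℂ)) ^ k)
          + (γ : ℂ)⁻¹ * u w *
            ∑ j : Fin p, J (e j) w * ∑' k : ℕ, b j k * (u w / (γ : ℂ)) ^ k := by
  intro h hh
  obtain ⟨D⟩ := exists_factorizationDescent hMclosed (T.isClosed_range_of_mul_norm_le hγ hlow)
    hFM hnear hh
  have hS := D.summable_norm_sq_scaledS hγ.le hlow
  have hΦ := D.summable_norm_sq_scaledφ hγ.le hlow
  refine ⟨fun i k => ⟪g i, D.scaledS γ k⟫_ℂ, fun j k => ⟪e j, D.scaledφ γ k⟫_ℂ,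
    hg_on.summable_prod_norm_inner_sq hS, he_on.summable_prod_norm_inner_sq hΦ,
    (add_le_add (hg_on.tsum_prod_norm_inner_sq_le hS) (he_on.tsum_prod_norm_inner_sq_le hΦ)).trans
      (D.tsum_norm_sq_scaledS_add_tsum_norm_sq_scaledφ_le hγ.le hlow), ?_⟩
  rintro w hw
  obtain ⟨hwW, hwu⟩ := hΩ ▸ hw
  have ht : ‖u w / (γ : ℂ)‖ < 1 := by
    rwa [norm_div, Complex.norm_real, Real.norm_of_nonneg hγ.le, div_lt_one hγ]
  let ev : H →L[ℂ] ℂ := ⟨(LinearMap.proj w).comp J, hJ_eval w hwW⟩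
  have hSsum := (summable_norm_pow_smul_of_norm_le ht (D.norm_scaledS_le hγ.le hlow)).of_norm
  have hΦsum := (summable_norm_pow_smul_of_norm_le ht (D.norm_scaledφ_le hγ.le hlow)).of_norm
  have hSmem k : D.scaledS γ k ∈ (Submodule.span ℂ (Set.range g)).topologicalClosure := by
    rw [hg_span]; exact Submodule.smul_mem _ _ (D.s_mem k)
  have hΦmem k : D.scaledφ γ k ∈ (Submodule.span ℂ (Set.range e)).topologicalClosure :=
    Submodule.le_topologicalClosure _ (by rw [he_span]; exact Submodule.smul_mem _ _ (D.φ_mem k))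
  refine ⟨fun i => summable_norm_mul_pow_of_norm_le ht fun k =>
      (hg_on.norm_inner_le i _).trans (D.norm_scaledS_le hγ.le hlow k),
    fun j => summable_norm_mul_pow_of_norm_le ht fun k =>
      (he_on.norm_inner_le j _).trans (D.norm_scaledφ_le hγ.le hlow k),
    hg_on.summable_norm_apply_mul_tsum_inner_mul_pow ev hSsum, ?_⟩
  have hexp := D.apply_eq_tsum ev (fun y => hTmul y w hwW) hγ hlow hwu
  rw [RCLike.ofReal_eq_complex_ofReal,
    ← (hg_on.hasSum_apply_mul_tsum_inner_mul_pow ev hSmem hSsum).tsum_eq,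
    ← (he_on.hasSum_apply_mul_tsum_inner_mul_pow ev hΦmem hΦsum).tsum_eq] at hexp
  rwa [inv_mul_eq_div, ← tsum_fintype (L := .unconditional _)]

/-- Factorization Theorem, case `M ⊄ M_u(H)`: every `h` in a nearly
`T⁻¹`-invariant subspace `M` with defect `p` of a Hilbert space of analytic functions
(realized via `J`) factors on `Ω = {|u| < γ}` as
`J h = Σ_i (J gᵢ)·qᵢ + γ⁻¹ u · Σ_j (J eⱼ)·hⱼ` with square-summable coefficient control. -/
theorem stmt_14 {d : ℕ} (hd : 1 ≤ d) (W : Set (Fin d → ℂ)) (hW : IsOpen W)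
    {H : Type*} [NormedAddCommGroup H] [InnerProductSpace ℂ H] [CompleteSpace H]
    (J : H →ₗ[ℂ] ((Fin d → ℂ) → ℂ))
    (hJ_an : ∀ h : H, AnalyticOnNhd ℂ (J h) W)
    (hJ_inj : ∀ h : H, (∀ w ∈ W, J h w = 0) → h = 0)
    (hJ_eval : ∀ w ∈ W, Continuous fun h : H => J h w)
    (u : (Fin d → ℂ) → ℂ) (hu : AnalyticOnNhd ℂ u W)
    (T : H →L[ℂ] H) (hTmul : ∀ (h : H), ∀ w ∈ W, J (T h) w = u w * J h w)
    (γ : ℝ) (hγ : 0 < γ) (hlow : ∀ h : H, γ * ‖h‖ ≤ ‖T h‖)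
    (Ω : Set (Fin d → ℂ)) (hΩ : Ω = {w ∈ W | ‖u w‖ < γ})
    (hcap : ∀ f : (Fin d → ℂ) → ℂ,
      (∀ n : ℕ, ∃ hn : H, ∀ w ∈ Ω, f w = (u w) ^ n * J hn w) → ∀ w ∈ Ω, f w = 0)
    (M F : Submodule ℂ H) (hMclosed : IsClosed (M : Set H))
    (p : ℕ) (hFdim : Module.finrank ℂ F = p) (hFM : F ≤ Mᗮ)
    (hnear : ∀ f : H, T f ∈ M → f ∈ M ⊔ F)
    (e : Fin p → H) (he_on : Orthonormal ℂ e)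
    (he_mem : ∀ j, e j ∈ F) (he_span : Submodule.span ℂ (Set.range e) = F)
    {I : Type*} (g : I → H) (hg_on : Orthonormal ℂ g)
    (hg_mem : ∀ i, g i ∈ M ⊓ (M ⊓ LinearMap.range (T : H →ₗ[ℂ] H))ᗮ)
    (hg_span : (Submodule.span ℂ (Set.range g)).topologicalClosure
      = M ⊓ (M ⊓ LinearMap.range (T : H →ₗ[ℂ] H))ᗮ) :
    ∀ h ∈ M, ∃ (c : I → ℕ → ℂ) (b : Fin p → ℕ → ℂ),
      Summable (fun ik : I × ℕ => ‖c ik.1 ik.2‖ ^ 2) ∧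
      Summable (fun jk : Fin p × ℕ => ‖b jk.1 jk.2‖ ^ 2) ∧
      (∑' ik : I × ℕ, ‖c ik.1 ik.2‖ ^ 2) + (∑' jk : Fin p × ℕ, ‖b jk.1 jk.2‖ ^ 2)
        ≤ ‖h‖ ^ 2 ∧
      ∀ w ∈ Ω,
        (∀ i : I, Summable fun k : ℕ => ‖c i k * (u w / (γ : ℂ)) ^ k‖) ∧
        (∀ j : Fin p, Summable fun k : ℕ => ‖b j k * (u w / (γ : ℂ)) ^ k‖) ∧
        Summable (fun i : I =>
          ‖J (g i) w * ∑' k : ℕ, c i k * (u w / (γ : ℂ)) ^ k‖) ∧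
        J h w = (∑' i : I, J (g i) w * ∑' k : ℕ, c i k * (u w / (γ : ℂ)) ^ k)
          + (γ : ℂ)⁻¹ * u w *
            ∑ j : Fin p, J (e j) w * ∑' k : ℕ, b j k * (u w / (γ : ℂ)) ^ k :=
  stmt_14_general W J hJ_eval u T hTmul γ hγ hlow Ω hΩ M F hMclosed p hFM hnear e he_on he_span g
    hg_on hg_span
end

section
/- (Factorization Theorem, case M ⊆ M_u(H).) Let d ≥ 1, let W be an open subset of ℂ^d, and let (H, j, u, T, γ) satisfy: H is a complex Hilbert space; j is a linear map from H to functions ℂ^d → ℂ such that each j h is analytic on W, and j is injective on W (if j h vanishes identically on W then h = 0); for each w ∈ W the evaluation h ↦ (j h)(w) is a continuous linear functional on H; u : ℂ^d → ℂ is analytic on W; T is a bounded linear operator on H with (j(T h))(w) = u(w)·(j h)(w) for all h ∈ H and w ∈ W; and γ > 0 satisfies γ‖h‖ ≤ ‖T h‖ for all h ∈ H. Set Ω := { w ∈ W : |u(w)| < γ }, and assume: every function f : ℂ^d → ℂ such that for each n ∈ ℕ there exists hₙ ∈ H with f(w) = u(w)ⁿ · (j hₙ)(w) for all w ∈ Ω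 vanishes identically on Ω. Let M ⊆ H be a closed subspace that is nearly T⁻¹-invariant with defect p, with defect space F orthogonal to M, and assume M ⊆ T(H); let (e_j)_{j=1}^{p} be an orthonormal basis of F. Then for every h ∈ M there exist complex numbers (b_{j,k})_{1≤j≤p, k∈ℕ} such that Σ_{j=1}^{p} Σ_{k∈ℕ} |b_{j,k}|² ≤ ‖h‖², and for every w ∈ Ω: (j h)(w) = γ⁻¹ u(w) · Σ_{j=1}^{p} (j e_j)(w) · ( Σ_{k=0}^{∞} b_{j,k} (u(w)/γ)^k ), where each inner power series converges absolutely. -/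
/-!
Near invariance and `M ⊆ T(H)` give a backward chain `x₀ = h`, `xₙ = T (xₙ₊₁ + gₙ)` with
`xₙ ∈ M` and `gₙ ∈ F`. As `F ⊥ M` and `γ‖y‖ ≤ ‖T y‖`, we get `γ² (‖xₙ₊₁‖² + ‖gₙ‖²) ≤ ‖xₙ‖²`, which
telescopes to `∑ₖ γ^(2(k+1)) ‖gₖ‖² ≤ ‖h‖²` and `γⁿ ‖xₙ‖ ≤ ‖h‖`. Evaluating at `w` turns the chain
into `J h w = ∑_{k<N} u(w)^(k+1) J gₖ w + u(w)^N J x_N w`, whose remainder is `O((|u(w)|/γ)^N)`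
on `Ω`. Expanding `gₖ = ∑ⱼ cₖⱼ eⱼ` gives `b j k = γ^(k+1) cₖⱼ`.
-/

open Filter Topology Finset

theorem exists_preimage_chain {R E : Type*} [Ring R] [AddCommGroup E] [Module R E]
    (T : E →ₗ[R] E) {M F : Submodule R E} (hnear : ∀ f, T f ∈ M → f ∈ M ⊔ F)
    (hM : M ≤ LinearMap.range T) {h : E} (hh : h ∈ M) :
    ∃ x g : ℕ → E, x 0 = h ∧ (∀ n, x n ∈ M) ∧ (∀ n, g n ∈ F) ∧
      ∀ n, T (x (n + 1) + g n) = x n := by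
  have step : ∀ m : M, ∃ m' : M, ∃ g ∈ F, T (m' + g) = m := by
    intro m
    obtain ⟨f, hf⟩ := hM m.2
    obtain ⟨m', hm', g, hg, rfl⟩ := Submodule.mem_sup.mp (hnear _ (hf ▸ m.2))
    exact ⟨⟨m', hm'⟩, g, hg, hf⟩
  choose next g hgF hT using step
  refine ⟨fun n => next^[n] ⟨h, hh⟩, fun n => g (next^[n] ⟨h, hh⟩), rfl,
    fun n => (next^[n] _).2, fun n => hgF _, fun n => ?_⟩
  simp only [Function.iterate_succ_apply']
  exact hT _

theorem sum_range_pow_succ_mul_add_pow_mul_le {c : ℝ} (hc : 0 ≤ c) {a b : ℕ → ℝ}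
    (hab : ∀ n, c * (a (n + 1) + b n) ≤ a n) (N : ℕ) :
    ∑ k ∈ range N, c ^ (k + 1) * b k + c ^ N * a N ≤ a 0 := by
  induction N with
  | zero => simp
  | succ N ih =>
    have := mul_le_mul_of_nonneg_left (hab N) (pow_nonneg hc N)
    rw [sum_range_succ]
    linarith [show c ^ N * (c * (a (N + 1) + b N)) = c ^ (N + 1) * b N + c ^ (N + 1) * a (N + 1)
      by ring]

theorem hasSum_prod_of_hasSum_sum {ι β : Type*} [Fintype ι] {f : ι × β → ℝ} (hf : 0 ≤ f) {a : ℝ}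
    (ha : HasSum (fun k => ∑ j, f (j, k)) a) : HasSum f a := by
  have hfib : ∀ j, Summable fun k => f (j, k) := fun j =>
    ha.summable.of_nonneg_of_le (fun k => hf _)
      fun k => single_le_sum (f := fun j => f (j, k)) (fun i _ => hf _) (mem_univ j)
  have hsum : Summable f := (summable_prod_of_nonneg hf).mpr ⟨hfib, Summable.of_finite⟩
  rw [← ha.tsum_eq, Summable.tsum_finsetSum fun j _ => hfib j,
    ← tsum_fintype (L := .unconditional ι), ← hsum.tsum_prod]
  exact hsum.hasSum

theorem tendsto_sum_range_pow_succ_mul {R : Type*} [CommRing R] [TopologicalSpace R]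
    [IsTopologicalAddGroup R] {s t : ℕ → R} {a : R} (hs : ∀ n, s n = a * (s (n + 1) + t n))
    (htail : Tendsto (fun N => a ^ N * s N) atTop (𝓝 0)) :
    Tendsto (fun N => ∑ k ∈ range N, a ^ (k + 1) * t k) atTop (𝓝 (s 0)) := by
  have hsplit : ∀ N, ∑ k ∈ range N, a ^ (k + 1) * t k = s 0 - a ^ N * s N := by
    intro N
    induction N with
    | zero => simp
    | succ N ih => rw [sum_range_succ, ih, hs N]; ring
  simpa [hsplit] using tendsto_const_nhds.sub htail

theorem tendsto_pow_mul_of_pow_mul_norm_le {𝕜 : Type*} [NormedDivisionRing 𝕜] {s : ℕ → 𝕜}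
    {γ K : ℝ} (hγ : 0 < γ) (hs : ∀ N, γ ^ N * ‖s N‖ ≤ K) {a : 𝕜} (ha : ‖a‖ < γ) :
    Tendsto (fun N => a ^ N * s N) atTop (𝓝 0) := by
  have hr : ‖a‖ / γ < 1 := (div_lt_one hγ).mpr ha
  refine squeeze_zero_norm (fun N => ?_)
    (by simpa using (tendsto_pow_atTop_nhds_zero_of_lt_one (by positivity) hr).const_mul K)
  rw [norm_mul, norm_pow, div_pow, ← mul_div_assoc, le_div_iff₀ (by positivity)]
  calc ‖a‖ ^ N * ‖s N‖ * γ ^ N = ‖a‖ ^ N * (γ ^ N * ‖s N‖) := by ring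
    _ ≤ ‖a‖ ^ N * K := mul_le_mul_of_nonneg_left (hs N) (by positivity)
    _ = K * ‖a‖ ^ N := mul_comm _ _

theorem eq_mul_sum_tsum_of_recurrence {𝕜 ι : Type*} [RCLike 𝕜] [Fintype ι] {γ K L : ℝ}
    (hγ : 0 < γ) {a : 𝕜} (ha : ‖a‖ < γ) {s : ℕ → 𝕜} {c : ℕ → ι → 𝕜} {E : ι → 𝕜}
    (hs : ∀ n, s n = a * (s (n + 1) + ∑ j, c n j * E j)) (hsK : ∀ N, γ ^ N * ‖s N‖ ≤ K)
    (hcL : ∀ j k, ‖(γ : 𝕜) ^ (k + 1) * c k j‖ ≤ L) :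
    (∀ j, Summable fun k => ‖(γ : 𝕜) ^ (k + 1) * c k j * (a / γ) ^ k‖) ∧
      s 0 = (γ : 𝕜)⁻¹ * a * ∑ j, E j * ∑' k, (γ : 𝕜) ^ (k + 1) * c k j * (a / γ) ^ k := by
  have hγ𝕜 : (γ : 𝕜) ≠ 0 := RCLike.ofReal_ne_zero.mpr hγ.ne'
  have hq : ‖a / γ‖ < 1 := by
    rwa [norm_div, RCLike.norm_ofReal, abs_of_pos hγ, div_lt_one hγ]
  have hsumm : ∀ j, Summable fun k => ‖(γ : 𝕜) ^ (k + 1) * c k j * (a / γ) ^ k‖ := fun j =>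
    ((summable_geometric_of_lt_one (norm_nonneg _) hq).mul_left L).of_nonneg_of_le
      (fun k => norm_nonneg _) fun k => by
        rw [norm_mul, norm_pow]
        exact mul_le_mul_of_nonneg_right (hcL j k) (by positivity)
  refine ⟨hsumm, ?_⟩
  have hlim := tendsto_sum_range_pow_succ_mul hs (tendsto_pow_mul_of_pow_mul_norm_le hγ hsK ha)
  have hterm : ∀ k, a ^ (k + 1) * ∑ j, c k j * E j =
      (γ : 𝕜)⁻¹ * a * ∑ j, E j * ((γ : 𝕜) ^ (k + 1) * c k j * (a / γ) ^ k) := by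
    intro k
    rw [mul_sum, mul_sum]
    refine sum_congr rfl fun j _ => ?_
    rw [div_pow]
    field_simp
    ring
  have hsum := (hasSum_sum (s := univ) fun j _ =>
    (hsumm j).of_norm.hasSum.mul_left (E j)).mul_left ((γ : 𝕜)⁻¹ * a)
  simp_rw [← hterm] at hsum
  exact tendsto_nhds_unique hlim hsum.tendsto_sum_nat

section InnerProductSpace

variable {𝕜 H : Type*} [RCLike 𝕜] [NormedAddCommGroup H] [InnerProductSpace 𝕜 H]

theorem sum_range_sq_pow_succ_mul_norm_sq_add_le {T : H → H} {γ : ℝ} (hγ : 0 ≤ γ)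
    (hlow : ∀ y, γ * ‖y‖ ≤ ‖T y‖) {x g : ℕ → H} (horth : ∀ n, inner 𝕜 (x (n + 1)) (g n) = 0)
    (hT : ∀ n, T (x (n + 1) + g n) = x n) (N : ℕ) :
    ∑ k ∈ range N, (γ ^ 2) ^ (k + 1) * ‖g k‖ ^ 2 + (γ ^ 2) ^ N * ‖x N‖ ^ 2 ≤ ‖x 0‖ ^ 2 := by
  refine sum_range_pow_succ_mul_add_pow_mul_le (sq_nonneg γ)
    (a := fun n => ‖x n‖ ^ 2) (b := fun n => ‖g n‖ ^ 2) (fun n => ?_) N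
  rw [sq ‖x (n + 1)‖, sq ‖g n‖,
    ← norm_add_sq_eq_norm_sq_add_norm_sq_of_inner_eq_zero _ _ (horth n), ← sq, ← mul_pow, ← hT n]
  exact pow_le_pow_left₀ (by positivity) (hlow _) 2

theorem Orthonormal.norm_sum_smul_sq {ι : Type*} {e : ι → H} (he : Orthonormal 𝕜 e)
    (l : ι → 𝕜) (s : Finset ι) : ‖∑ i ∈ s, l i • e i‖ ^ 2 = ∑ i ∈ s, ‖l i‖ ^ 2 := by
  apply RCLike.ofReal_injective (K := 𝕜)
  push_cast
  rw [← inner_self_eq_norm_sq_to_K, he.inner_sum]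
  exact sum_congr rfl fun i _ => RCLike.conj_mul (l i)

theorem Orthonormal.summable_sq_norm_pow_mul_coeff {ι : Type*} [Fintype ι] {e : ι → H}
    (he : Orthonormal 𝕜 e) {g : ℕ → H} {c : ℕ → ι → 𝕜} (hc : ∀ n, ∑ j, c n j • e j = g n)
    {γ A : ℝ} (hγ : 0 ≤ γ) (hA : ∀ N, ∑ k ∈ range N, (γ ^ 2) ^ (k + 1) * ‖g k‖ ^ 2 ≤ A) :
    Summable (fun jk : ι × ℕ => ‖(γ : 𝕜) ^ (jk.2 + 1) * c jk.2 jk.1‖ ^ 2) ∧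
      ∑' jk : ι × ℕ, ‖(γ : 𝕜) ^ (jk.2 + 1) * c jk.2 jk.1‖ ^ 2 ≤ A := by
  have hcoef : ∀ k, (γ ^ 2) ^ (k + 1) * ‖g k‖ ^ 2 = ∑ j, ‖(γ : 𝕜) ^ (k + 1) * c k j‖ ^ 2 := by
    intro k
    rw [← hc k, he.norm_sum_smul_sq, mul_sum]
    refine sum_congr rfl fun j _ => ?_
    rw [norm_mul, norm_pow, RCLike.norm_ofReal, abs_of_nonneg hγ]
    ring
  have hsum := hasSum_prod_of_hasSum_sum (f := fun jk : ι × ℕ =>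
      ‖(γ : 𝕜) ^ (jk.2 + 1) * c jk.2 jk.1‖ ^ 2) (fun _ => sq_nonneg _)
    (by simpa only [← hcoef] using (summable_of_sum_range_le (fun k => by positivity) hA).hasSum)
  exact ⟨hsum.summable, hsum.tsum_eq ▸ Real.tsum_le_of_sum_range_le (fun k => by positivity) hA⟩

end InnerProductSpace

theorem stmt_15_general {d : ℕ} (W : Set (Fin d → ℂ))
    {H : Type*} [NormedAddCommGroup H] [InnerProductSpace ℂ H]
    (J : H →ₗ[ℂ] ((Fin d → ℂ) → ℂ))
    (hJ_eval : ∀ w ∈ W, Continuous fun h : H => J h w)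
    (u : (Fin d → ℂ) → ℂ)
    (T : H →L[ℂ] H) (hTmul : ∀ (h : H), ∀ w ∈ W, J (T h) w = u w * J h w)
    (γ : ℝ) (hγ : 0 < γ) (hlow : ∀ h : H, γ * ‖h‖ ≤ ‖T h‖)
    (Ω : Set (Fin d → ℂ)) (hΩ : Ω = {w ∈ W | ‖u w‖ < γ})
    (M F : Submodule ℂ H)
    (p : ℕ) (hFM : F ≤ Mᗮ)
    (hnear : ∀ f : H, T f ∈ M → f ∈ M ⊔ F)
    (hMsub : M ≤ LinearMap.range (T : H →ₗ[ℂ] H))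
    (e : Fin p → H) (he_on : Orthonormal ℂ e)
    (he_span : Submodule.span ℂ (Set.range e) = F) :
    ∀ h ∈ M, ∃ b : Fin p → ℕ → ℂ,
      Summable (fun jk : Fin p × ℕ => ‖b jk.1 jk.2‖ ^ 2) ∧
      (∑' jk : Fin p × ℕ, ‖b jk.1 jk.2‖ ^ 2) ≤ ‖h‖ ^ 2 ∧
      ∀ w ∈ Ω,
        (∀ j : Fin p, Summable fun k : ℕ => ‖b j k * (u w / (γ : ℂ)) ^ k‖) ∧
        J h w = (γ : ℂ)⁻¹ * u w *
          ∑ j : Fin p, J (e j) w * ∑' k : ℕ, b j k * (u w / (γ : ℂ)) ^ k := by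
  intro h hh
  obtain ⟨x, g, rfl, hxM, hgF, hT⟩ := exists_preimage_chain (T : H →ₗ[ℂ] H) hnear hMsub hh
  simp only [ContinuousLinearMap.coe_coe] at hT
  have hchain := sum_range_sq_pow_succ_mul_norm_sq_add_le hγ.le hlow
    (fun n => Submodule.inner_right_of_mem_orthogonal (hxM (n + 1)) (hFM (hgF n))) hT
  choose c hc using fun n => (Submodule.mem_span_range_iff_exists_fun ℂ).mp (he_span ▸ hgF n)
  obtain ⟨hb, hble⟩ := he_on.summable_sq_norm_pow_mul_coeff hc hγ.le fun N =>
    (le_add_of_nonneg_right (by positivity)).trans (hchain N)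
  have hbh : ∀ j k, ‖(γ : ℂ) ^ (k + 1) * c k j‖ ≤ ‖x 0‖ := fun j k =>
    (pow_le_pow_iff_left₀ (norm_nonneg _) (norm_nonneg _) two_ne_zero).mp <|
      (hb.le_tsum (j, k) fun _ _ => sq_nonneg _).trans hble
  refine ⟨fun j k => (γ : ℂ) ^ (k + 1) * c k j, hb, hble, fun w hw => ?_⟩
  rw [hΩ] at hw
  let φ : H →L[ℂ] ℂ := ⟨(LinearMap.proj w).comp J, hJ_eval w hw.1⟩
  refine eq_mul_sum_tsum_of_recurrence hγ hw.2 (s := fun n => J (x n) w) (K := ‖φ‖ * ‖x 0‖)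
    (fun n => ?_) (fun N => ?_) hbh
  · simp [← hT n, hTmul _ w hw.1, ← hc n, mul_add, mul_sum, mul_left_comm]
  · have hxN : γ ^ N * ‖x N‖ ≤ ‖x 0‖ := by
      refine (pow_le_pow_iff_left₀ (by positivity) (norm_nonneg _) two_ne_zero).mp ?_
      rw [mul_pow, ← pow_mul, mul_comm N, pow_mul]
      exact (le_add_of_nonneg_left (sum_nonneg fun k _ => by positivity)).trans (hchain N)
    calc γ ^ N * ‖J (x N) w‖ ≤ γ ^ N * (‖φ‖ * ‖x N‖) := by gcongr; exact φ.le_opNorm _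
      _ = ‖φ‖ * (γ ^ N * ‖x N‖) := by ring
      _ ≤ ‖φ‖ * ‖x 0‖ := by gcongr

/-- Factorization Theorem, case `M ⊆ M_u(H)`: every `h` in a nearly
`T⁻¹`-invariant subspace `M ⊆ T(H)` with defect `p` of a Hilbert space of analytic functions
(realized via `J`) factors on `Ω = {|u| < γ}` as `J h = γ⁻¹ u · Σ_j (J eⱼ)·hⱼ`
with square-summable coefficient control. -/
theorem stmt_15 {d : ℕ} (hd : 1 ≤ d) (W : Set (Fin d → ℂ)) (hW : IsOpen W)
    {H : Type*} [NormedAddCommGroup H] [InnerProductSpace ℂ H] [CompleteSpace H]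
    (J : H →ₗ[ℂ] ((Fin d → ℂ) → ℂ))
    (hJ_an : ∀ h : H, AnalyticOnNhd ℂ (J h) W)
    (hJ_inj : ∀ h : H, (∀ w ∈ W, J h w = 0) → h = 0)
    (hJ_eval : ∀ w ∈ W, Continuous fun h : H => J h w)
    (u : (Fin d → ℂ) → ℂ) (hu : AnalyticOnNhd ℂ u W)
    (T : H →L[ℂ] H) (hTmul : ∀ (h : H), ∀ w ∈ W, J (T h) w = u w * J h w)
    (γ : ℝ) (hγ : 0 < γ) (hlow : ∀ h : H, γ * ‖h‖ ≤ ‖T h‖)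
    (Ω : Set (Fin d → ℂ)) (hΩ : Ω = {w ∈ W | ‖u w‖ < γ})
    (hcap : ∀ f : (Fin d → ℂ) → ℂ,
      (∀ n : ℕ, ∃ hn : H, ∀ w ∈ Ω, f w = (u w) ^ n * J hn w) → ∀ w ∈ Ω, f w = 0)
    (M F : Submodule ℂ H) (hMclosed : IsClosed (M : Set H))
    (p : ℕ) (hFdim : Module.finrank ℂ F = p) (hFM : F ≤ Mᗮ)
    (hnear : ∀ f : H, T f ∈ M → f ∈ M ⊔ F)
    (hMsub : M ≤ LinearMap.range (T : H →ₗ[ℂ] H))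
    (e : Fin p → H) (he_on : Orthonormal ℂ e)
    (he_mem : ∀ j, e j ∈ F) (he_span : Submodule.span ℂ (Set.range e) = F) :
    ∀ h ∈ M, ∃ b : Fin p → ℕ → ℂ,
      Summable (fun jk : Fin p × ℕ => ‖b jk.1 jk.2‖ ^ 2) ∧
      (∑' jk : Fin p × ℕ, ‖b jk.1 jk.2‖ ^ 2) ≤ ‖h‖ ^ 2 ∧
      ∀ w ∈ Ω,
        (∀ j : Fin p, Summable fun k : ℕ => ‖b j k * (u w / (γ : ℂ)) ^ k‖) ∧
        J h w = (γ : ℂ)⁻¹ * u w *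
          ∑ j : Fin p, J (e j) w * ∑' k : ℕ, b j k * (u w / (γ : ℂ)) ^ k :=
  stmt_15_general W J hJ_eval u T hTmul γ hγ hlow Ω hΩ M F p hFM hnear hMsub e he_on he_span
end

section
/- Let α ∈ [-1, 0) be a real number and let G be a natural number with G ≥ 1. Define weights w : ℕ → ℝ by w(n) = G^α for n < G and w(n) = (n+1)^α for n ≥ G. Then for every n ∈ ℕ, w(n+1) ≥ (1 − 1/(G+1))^{−α} · w(n), and consequently, for every normed space K and every sequence a : ℕ → K, one has Σₙ w(n+1)·‖a(n)‖² ≥ (1 − 1/(G+1))^{−α} · Σₙ w(n)·‖a(n)‖² (as sums in [0,∞]). In other words, the lower bound of the forward shift on the weighted sequence space with weights w (which models multiplication by a finite Blaschke product B on the Dirichlet-type space D_α with the modified norm ‖·‖₁) is at least γ₁ := (1 − 1/(G+1))^{−α/2}. -/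
/-! The weight is `w n = (max G (n + 1)) ^ α`. Since `x := max G (n + 1) ≥ G` and
`max G (n + 2) ≤ x + 1`, the ratio `x / max G (n + 2)` is at least `x / (x + 1) ≥ G / (G + 1)`;
raising this to the nonnegative power `-α` gives the pointwise bound, and the bound on the
weighted sums follows termwise. -/

theorem ENNReal.ofReal_mul_tsum_le_tsum {ι : Type*} {c : ℝ} (hc : 0 ≤ c) {f g : ι → ℝ}
    (h : ∀ i, c * f i ≤ g i) :
    ENNReal.ofReal c * ∑' i, ENNReal.ofReal (f i) ≤ ∑' i, ENNReal.ofReal (g i) := by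
  rw [← ENNReal.tsum_mul_left]
  exact ENNReal.tsum_le_tsum fun i => by
    rw [← ENNReal.ofReal_mul hc]
    exact ENNReal.ofReal_le_ofReal (h i)

theorem Real.rpow_neg_mul_rpow_le_of_le_div {α r x y : ℝ} (hα : α ≤ 0) (hr : 0 ≤ r)
    (hx : 0 < x) (hy : 0 < y) (hrxy : r ≤ x / y) : r ^ (-α) * x ^ α ≤ y ^ α :=
  calc r ^ (-α) * x ^ α ≤ (x / y) ^ (-α) * x ^ α := by gcongr; linarith
    _ = y ^ α := by
      rw [Real.rpow_neg (by positivity), Real.div_rpow hx.le hy.le]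
      have := (Real.rpow_pos_of_pos hx α).ne'
      have := (Real.rpow_pos_of_pos hy α).ne'
      field_simp

theorem div_add_one_le_div_of_le_add_one {g x y : ℝ} (hg : 0 ≤ g) (hgx : g ≤ x) (hy : 0 < y)
    (hyx : y ≤ x + 1) : g / (g + 1) ≤ x / y :=
  calc g / (g + 1) ≤ x / (x + 1) := by
        rw [div_le_div_iff₀ (by positivity) (by linarith)]; linarith
    _ ≤ x / y := div_le_div_of_nonneg_left (hg.trans hgx) hy hyx

theorem div_add_one_rpow_neg_mul_max_rpow_le {α g t : ℝ} (hα : α ≤ 0) (hg : 0 ≤ g) (ht : 0 < t) :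
    (g / (g + 1)) ^ (-α) * max g t ^ α ≤ max g (t + 1) ^ α := by
  refine Real.rpow_neg_mul_rpow_le_of_le_div hα (by positivity) (by positivity) (by positivity) ?_
  refine div_add_one_le_div_of_le_add_one hg (le_max_left g t) (by positivity) ?_
  exact max_le (by linarith [le_max_left g t]) (by linarith [le_max_right g t])

theorem ite_rpow_eq_max_rpow (α : ℝ) (G n : ℕ) :
    (if n < G then (G : ℝ) ^ α else ((n : ℝ) + 1) ^ α) = max (G : ℝ) ((n : ℝ) + 1) ^ α := by
  split_ifs with h
  · rw [max_eq_left (by exact_mod_cast h)]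
  · rw [max_eq_right (by exact_mod_cast (not_lt.1 h).trans n.le_succ)]

theorem stmt_16_general (α : ℝ) (hα₂ : α < 0) (G : ℕ)
    (w : ℕ → ℝ) (hw : ∀ n : ℕ, w n = if n < G then (G : ℝ) ^ α else ((n : ℝ) + 1) ^ α)
    (K : Type*) [NormedAddCommGroup K] (a : ℕ → K) :
    (∀ n : ℕ, (1 - 1 / ((G : ℝ) + 1)) ^ (-α) * w n ≤ w (n + 1)) ∧
    ENNReal.ofReal ((1 - 1 / ((G : ℝ) + 1)) ^ (-α)) *
        (∑' n : ℕ, ENNReal.ofReal (w n * ‖a n‖ ^ 2))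
      ≤ ∑' n : ℕ, ENNReal.ofReal (w (n + 1) * ‖a n‖ ^ 2) := by
  have hbase : 1 - 1 / ((G : ℝ) + 1) = G / (G + 1) := by field_simp; ring
  have hshift (n : ℕ) : (G / (G + 1) : ℝ) ^ (-α) * w n ≤ w (n + 1) := by
    rw [hw, hw, ite_rpow_eq_max_rpow, ite_rpow_eq_max_rpow, Nat.cast_succ]
    exact div_add_one_rpow_neg_mul_max_rpow_le hα₂.le G.cast_nonneg n.cast_add_one_pos
  rw [hbase]
  refine ⟨hshift, ENNReal.ofReal_mul_tsum_le_tsum (by positivity) fun n => ?_⟩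
  rw [← mul_assoc]
  exact mul_le_mul_of_nonneg_right (hshift n) (sq_nonneg _)

/-- the weight `w(n) = Gᵅ` for `n < G`, `w(n) = (n+1)ᵅ` for `n ≥ G`
(with `α ∈ [-1,0)`) satisfies `w(n+1) ≥ (1 - 1/(G+1))^{-α} · w(n)`, and hence the forward
shift on the corresponding weighted sequence space has lower bound at least
`γ₁ = (1 - 1/(G+1))^{-α/2}`. -/
theorem stmt_16 (α : ℝ) (hα₁ : -1 ≤ α) (hα₂ : α < 0) (G : ℕ) (hG : 1 ≤ G)
    (w : ℕ → ℝ) (hw : ∀ n : ℕ, w n = if n < G then (G : ℝ) ^ α else ((n : ℝ) + 1) ^ α)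
    (K : Type*) [NormedAddCommGroup K] (a : ℕ → K) :
    (∀ n : ℕ, (1 - 1 / ((G : ℝ) + 1)) ^ (-α) * w n ≤ w (n + 1)) ∧
    ENNReal.ofReal ((1 - 1 / ((G : ℝ) + 1)) ^ (-α)) *
        (∑' n : ℕ, ENNReal.ofReal (w n * ‖a n‖ ^ 2))
      ≤ ∑' n : ℕ, ENNReal.ofReal (w (n + 1) * ‖a n‖ ^ 2) :=
  stmt_16_general α hα₂ G w hw K a
end

section
/- Let α ∈ [0,1] be a real number, let K be a nonzero finite-dimensional complex Hilbert space, let W_α be the Hilbert space of sequences f : ℕ → K with ‖f‖²_α := Σₙ (n+1)^α ‖f(n)‖²_K < ∞, and let T be the forward shift on W_α, (T f)(0) = 0 and (T f)(n+1) = f(n), which is bounded and satisfies ‖T f‖_α ≥ ‖f‖_α. Let M be a closed subspace of W_α that is nearly T⁻¹-invariant with defect p, with defect space F orthogonal to M, and assume M is not contained in T(W_α). Let (e_j)_{j=1}^{p} be an orthonormal basis of F, and let (f_i)_{i=1}^{r} be an orthonormal basis of the (finite-dimensional) subspace M ⊖ (M ∩ T(W_α)). Then for every f ∈ M there exist complex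 numbers (c_{i,k})_{1≤i≤r, k∈ℕ} and (d_{j,k})_{1≤j≤p, k∈ℕ} such that Σ_{i=1}^{r} Σ_{k∈ℕ} |c_{i,k}|² + Σ_{j=1}^{p} Σ_{k∈ℕ} |d_{j,k}|² ≤ ‖f‖²_α, and for every n ∈ ℕ: f(n) = Σ_{i=1}^{r} Σ_{k=0}^{n} c_{i,k} · f_i(n−k) + Σ_{j=1}^{p} Σ_{k=0}^{n−1} d_{j,k} · e_j(n−1−k) (equality in K, empty sums being zero). -/
open Finset

/-!
Starting from `m ∈ M`, split `m = u + g` with `g` the orthogonal projection of `m` onto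
`M ∩ T(W_α)` and `u` in the wandering space `M ⊖ (M ∩ T(W_α))`. Writing `g = T h`, near
invariance puts `h = a + b` with `a ∈ M`, `b ∈ F`, and since `T` is expansive,
`‖u‖² + ‖a‖² + ‖b‖² ≤ ‖u‖² + ‖g‖² = ‖m‖²`. Iterating on `a` expands `f` as
`Σₖ Tᵏ (uₖ + T bₖ)`, where the energies `‖uₖ‖² + ‖bₖ‖²` telescope to at most `‖f‖²`;
expanding `uₖ`, `bₖ` in the orthonormal bases and reading off coordinates, on which `T` acts as
the shift, gives the convolution formula.
-/

lemma Orthonormal.norm_sum_smul_sq_s17 {𝕜 E ι : Type*} [RCLike 𝕜] [NormedAddCommGroup E]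
    [InnerProductSpace 𝕜 E] [Fintype ι] {v : ι → E} (hv : Orthonormal 𝕜 v) (l : ι → 𝕜) :
    ‖∑ i, l i • v i‖ ^ 2 = ∑ i, ‖l i‖ ^ 2 := by
  have h := hv.inner_sum l l univ
  simp only [inner_self_eq_norm_sq_to_K, RCLike.conj_mul] at h
  exact_mod_cast h

lemma Orthonormal.exists_sum_smul_eq {𝕜 E ι : Type*} [RCLike 𝕜] [NormedAddCommGroup E]
    [InnerProductSpace 𝕜 E] [Fintype ι] {v : ι → E} (hv : Orthonormal 𝕜 v) {x : E}
    (hx : x ∈ Submodule.span 𝕜 (Set.range v)) :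
    ∃ l : ι → 𝕜, x = ∑ i, l i • v i ∧ ‖x‖ ^ 2 = ∑ i, ‖l i‖ ^ 2 := by
  obtain ⟨l, rfl⟩ := (Submodule.mem_span_range_iff_exists_fun 𝕜).mp hx
  exact ⟨l, rfl, hv.norm_sum_smul_sq_s17 l⟩

lemma ContinuousLinearMap.isClosed_range_of_norm_le {𝕜 E F : Type*} [NontriviallyNormedField 𝕜]
    [NormedAddCommGroup E] [NormedSpace 𝕜 E] [CompleteSpace E] [NormedAddCommGroup F]
    [NormedSpace 𝕜 F] (T : E →L[𝕜] F) (hT : ∀ x, ‖x‖ ≤ ‖T x‖) :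
    IsClosed (LinearMap.range (T : E →ₗ[𝕜] F) : Set F) := by
  rw [LinearMap.coe_range]
  exact (T.antilipschitz_of_bound (K := 1) (by simpa using hT)).isClosed_range T.uniformContinuous

lemma exists_orbit {α β : Type*} {R : α → β → α → Prop} (h : ∀ a, ∃ b a', R a b a') (a₀ : α) :
    ∃ (x : ℕ → α) (y : ℕ → β), x 0 = a₀ ∧ ∀ k, R (x k) (y k) (x (k + 1)) := by
  choose g s hs using h
  refine ⟨fun k => s^[k] a₀, fun k => g (s^[k] a₀), rfl, fun k => ?_⟩
  simp only [Function.iterate_succ_apply']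
  exact hs _

lemma summable_and_tsum_le_of_add_le {a u : ℕ → ℝ} (ha : ∀ k, 0 ≤ a k) (hu : ∀ k, 0 ≤ u k)
    (h : ∀ k, a k + u (k + 1) ≤ u k) : Summable a ∧ ∑' k, a k ≤ u 0 := by
  have hpartial : ∀ n, ∑ k ∈ range n, a k + u n ≤ u 0 := by
    intro n
    induction n with
    | zero => simp
    | succ n ih => linarith [sum_range_succ a n, h n]
  have hbound : ∀ n, ∑ k ∈ range n, a k ≤ u 0 := fun n => by linarith [hpartial n, hu n]
  exact ⟨summable_of_sum_range_le ha hbound, Real.tsum_le_of_sum_range_le ha hbound⟩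

lemma summable_prod_and_tsum_prod_eq {ι : Type*} [Fintype ι] {f : ι → ℕ → ℝ}
    (hf₀ : ∀ i k, 0 ≤ f i k) (hf : Summable fun k => ∑ i, f i k) :
    Summable (fun ik : ι × ℕ => f ik.1 ik.2) ∧
      ∑' ik : ι × ℕ, f ik.1 ik.2 = ∑' k, ∑ i, f i k := by
  have hfi : ∀ i, Summable (f i) := fun i =>
    hf.of_nonneg_of_le (hf₀ i) fun k => single_le_sum (fun j _ => hf₀ j k) (mem_univ i)
  have hprod : Summable (fun ik : ι × ℕ => f ik.1 ik.2) :=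
    (summable_prod_of_nonneg fun _ => hf₀ _ _).mpr ⟨hfi, .of_finite⟩
  refine ⟨hprod, ?_⟩
  rw [hprod.tsum_prod' hfi, tsum_fintype, Summable.tsum_finsetSum fun i _ => hfi i]

lemma eq_sum_of_shift_recursion {R K ι κ : Type*} [Semiring R] [AddCommMonoid K] [Module R K]
    [Fintype ι] [Fintype κ] {x : ℕ → ℕ → K} {φ : ι → ℕ → K} {ψ : κ → ℕ → K}
    {c : ι → ℕ → R} {d : κ → ℕ → R} (h₀ : ∀ k, x k 0 = ∑ i, c i k • φ i 0)
    (hsucc : ∀ k n, x k (n + 1) = ∑ i, c i k • φ i (n + 1) + (x (k + 1) n + ∑ j, d j k • ψ j n))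
    (n k : ℕ) :
    x k n = ∑ i, ∑ t ∈ range (n + 1), c i (k + t) • φ i (n - t)
      + ∑ j, ∑ t ∈ range n, d j (k + t) • ψ j (n - 1 - t) := by
  induction n generalizing k with
  | zero => simp [h₀]
  | succ n ih =>
    have hc : ∀ i, ∑ t ∈ range (n + 2), c i (k + t) • φ i (n + 1 - t)
        = ∑ t ∈ range (n + 1), c i (k + 1 + t) • φ i (n - t) + c i k • φ i (n + 1) := fun i => by
      rw [sum_range_succ']
      refine congrArg₂ _ (sum_congr rfl fun t _ => ?_) rfl
      rw [show k + (t + 1) = k + 1 + t by omega, show n + 1 - (t + 1) = n - t by omega]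
    have hd : ∀ j, ∑ t ∈ range (n + 1), d j (k + t) • ψ j (n - t)
        = ∑ t ∈ range n, d j (k + 1 + t) • ψ j (n - 1 - t) + d j k • ψ j n := fun j => by
      rw [sum_range_succ']
      refine congrArg₂ _ (sum_congr rfl fun t _ => ?_) rfl
      rw [show k + (t + 1) = k + 1 + t by omega, show n - (t + 1) = n - 1 - t by omega]
    rw [hsucc, ih (k + 1), Nat.add_sub_cancel, sum_congr rfl fun i _ => hc i,
      sum_congr rfl fun j _ => hd j, sum_add_distrib, sum_add_distrib]
    abel

section NearlyInvariant

variable {𝕜 E : Type*} [RCLike 𝕜] [NormedAddCommGroup E] [InnerProductSpace 𝕜 E]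

def IsNearlyInvInvariant (T : E →L[𝕜] E) (M F : Submodule 𝕜 E) : Prop :=
  F ≤ Mᗮ ∧ ∀ x, T x ∈ M → x ∈ M ⊔ F

variable [CompleteSpace E] {T : E →L[𝕜] E} {M F : Submodule 𝕜 E}

lemma IsNearlyInvInvariant.exists_eq_add_apply (hMF : IsNearlyInvInvariant T M F)
    (hT : ∀ x, ‖x‖ ≤ ‖T x‖) (hM : IsClosed (M : Set E)) {m : E} (hm : m ∈ M) :
    ∃ u ∈ M ⊓ (M ⊓ LinearMap.range (T : E →ₗ[𝕜] E))ᗮ, ∃ a ∈ M, ∃ b ∈ F,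
      m = u + T (a + b) ∧ ‖u‖ ^ 2 + ‖a‖ ^ 2 + ‖b‖ ^ 2 ≤ ‖m‖ ^ 2 := by
  set N := M ⊓ LinearMap.range (T : E →ₗ[𝕜] E)
  have : CompleteSpace N := (hM.inter (T.isClosed_range_of_norm_le hT)).completeSpace_coe
  have hg : N.starProjection m ∈ N := N.starProjection_apply_mem m
  have hu : m - N.starProjection m ∈ Nᗮ := N.sub_starProjection_mem_orthogonal m
  obtain ⟨h, hh⟩ : ∃ h, T h = N.starProjection m := hg.2
  obtain ⟨a, ha, b, hb, rfl⟩ := Submodule.mem_sup.mp (hMF.2 h (hh ▸ hg.1))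
  refine ⟨m - N.starProjection m, ⟨M.sub_mem hm hg.1, hu⟩, a, ha, b, hb, by rw [hh]; abel, ?_⟩
  have hm_sq : ‖m‖ ^ 2 = ‖m - N.starProjection m‖ ^ 2 + ‖N.starProjection m‖ ^ 2 := by
    simpa only [sub_add_cancel, ← sq] using norm_add_sq_eq_norm_sq_add_norm_sq_of_inner_eq_zero
      _ _ (N.inner_left_of_mem_orthogonal hg hu)
  have hab_sq : ‖a + b‖ ^ 2 = ‖a‖ ^ 2 + ‖b‖ ^ 2 := by
    simpa only [← sq] using norm_add_sq_eq_norm_sq_add_norm_sq_of_inner_eq_zero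
      _ _ (M.inner_right_of_mem_orthogonal ha (hMF.1 hb))
  have hab_le : ‖a + b‖ ^ 2 ≤ ‖N.starProjection m‖ ^ 2 := by
    rw [← hh]; gcongr; exact hT _
  linarith

lemma IsNearlyInvInvariant.exists_coeffs_eq_add_apply {ι κ : Type*} [Fintype ι] [Fintype κ]
    (hMF : IsNearlyInvInvariant T M F) (hT : ∀ x, ‖x‖ ≤ ‖T x‖) (hM : IsClosed (M : Set E))
    {fb : ι → E} (hfb : Orthonormal 𝕜 fb)
    (hfb_span : Submodule.span 𝕜 (Set.range fb) = M ⊓ (M ⊓ LinearMap.range (T : E →ₗ[𝕜] E))ᗮ)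
    {e : κ → E} (he : Orthonormal 𝕜 e) (he_span : Submodule.span 𝕜 (Set.range e) = F) (m : M) :
    ∃ (cd : (ι → 𝕜) × (κ → 𝕜)) (m' : M),
      (m : E) = ∑ i, cd.1 i • fb i + T (m' + ∑ j, cd.2 j • e j) ∧
      (∑ i, ‖cd.1 i‖ ^ 2 + ∑ j, ‖cd.2 j‖ ^ 2) + ‖(m' : E)‖ ^ 2 ≤ ‖(m : E)‖ ^ 2 := by
  obtain ⟨u, hu, a, ha, b, hb, hm, hle⟩ := hMF.exists_eq_add_apply hT hM m.2
  obtain ⟨c, rfl, hc⟩ := hfb.exists_sum_smul_eq (hfb_span ▸ hu)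
  obtain ⟨d, rfl, hd⟩ := he.exists_sum_smul_eq (he_span ▸ hb)
  exact ⟨(c, d), ⟨a, ha⟩, hm, by linarith⟩

end NearlyInvariant
theorem stmt_17_general
    {K : Type*} [NormedAddCommGroup K] [InnerProductSpace ℂ K]
    {Wα : Type*} [NormedAddCommGroup Wα] [InnerProductSpace ℂ Wα] [CompleteSpace Wα]
    (coord : Wα →ₗ[ℂ] (ℕ → K))
    (T : Wα →L[ℂ] Wα)
    (hT0 : ∀ f : Wα, coord (T f) 0 = 0)
    (hTn : ∀ (f : Wα) (n : ℕ), coord (T f) (n + 1) = coord f n)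
    (hTlow : ∀ f : Wα, ‖f‖ ≤ ‖T f‖)
    (M F : Submodule ℂ Wα) (hMclosed : IsClosed (M : Set Wα))
    (p : ℕ) (hFM : F ≤ Mᗮ)
    (hnear : ∀ f : Wα, T f ∈ M → f ∈ M ⊔ F)
    (e : Fin p → Wα) (he_on : Orthonormal ℂ e)
    (he_span : Submodule.span ℂ (Set.range e) = F)
    (r : ℕ) (fb : Fin r → Wα) (hfb_on : Orthonormal ℂ fb)
    (hfb_span : Submodule.span ℂ (Set.range fb) = M ⊓ (M ⊓ LinearMap.range (T : Wα →ₗ[ℂ] Wα))ᗮ) :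
    ∀ f ∈ M, ∃ (c : Fin r → ℕ → ℂ) (d : Fin p → ℕ → ℂ),
      Summable (fun ik : Fin r × ℕ => ‖c ik.1 ik.2‖ ^ 2) ∧
      Summable (fun jk : Fin p × ℕ => ‖d jk.1 jk.2‖ ^ 2) ∧
      (∑' ik : Fin r × ℕ, ‖c ik.1 ik.2‖ ^ 2) + (∑' jk : Fin p × ℕ, ‖d jk.1 jk.2‖ ^ 2)
        ≤ ‖f‖ ^ 2 ∧
      ∀ n : ℕ, coord f n
        = (∑ i : Fin r, ∑ k ∈ Finset.range (n + 1), c i k • coord (fb i) (n - k))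
          + ∑ j : Fin p, ∑ k ∈ Finset.range n, d j k • coord (e j) (n - 1 - k) := by
  intro f hf
  obtain ⟨x, cd, hx₀, hx⟩ := exists_orbit (IsNearlyInvInvariant.exists_coeffs_eq_add_apply
    ⟨hFM, hnear⟩ hTlow hMclosed hfb_on hfb_span he_on he_span) ⟨f, hf⟩
  set c : Fin r → ℕ → ℂ := fun i k => (cd k).1 i
  set d : Fin p → ℕ → ℂ := fun j k => (cd k).2 j
  obtain ⟨hcd, hcd_le⟩ := summable_and_tsum_le_of_add_le (fun k => by positivity)
    (fun k => sq_nonneg ‖(x k : Wα)‖) fun k => (hx k).2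
  have hc : Summable fun k => ∑ i, ‖c i k‖ ^ 2 :=
    hcd.of_nonneg_of_le (fun k => by positivity) fun k => le_add_of_nonneg_right (by positivity)
  have hd : Summable fun k => ∑ j, ‖d j k‖ ^ 2 :=
    hcd.of_nonneg_of_le (fun k => by positivity) fun k => le_add_of_nonneg_left (by positivity)
  obtain ⟨hc_prod, hc_tsum⟩ := summable_prod_and_tsum_prod_eq (fun i k => sq_nonneg ‖c i k‖) hc
  obtain ⟨hd_prod, hd_tsum⟩ := summable_prod_and_tsum_prod_eq (fun j k => sq_nonneg ‖d j k‖) hd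
  refine ⟨c, d, hc_prod, hd_prod, ?_, fun n => ?_⟩
  · rw [hc_tsum, hd_tsum, ← hc.tsum_add hd]
    simpa only [hx₀] using hcd_le
  have h₀ : ∀ k, coord (x k) 0 = ∑ i, c i k • coord (fb i) 0 := fun k => by
    rw [(hx k).1]; simp [c, hT0]
  have hsucc : ∀ k n, coord (x k) (n + 1) = ∑ i, c i k • coord (fb i) (n + 1)
      + (coord (x (k + 1)) n + ∑ j, d j k • coord (e j) n) := fun k n => by
    rw [(hx k).1]; simp [c, d, hTn]
  simpa [hx₀] using eq_sum_of_shift_recursion h₀ hsucc n 0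

/-- coefficient factorization for nearly `T⁻¹`-invariant subspaces with defect
`p` of the weighted sequence space `W_α` (the coefficient model of the Dirichlet-type space
`D_α`, `α ∈ [0,1]`), case `M ⊄ T(W_α)`.  The space `W_α` is presented abstractly as a Hilbert
space `Wα` with an injective coordinate map `coord : Wα →ₗ (ℕ → K)` realizing the weighted
`ℓ²`-norm, on which `T` acts as the forward shift. -/
theorem stmt_17 (α : ℝ) (hα₀ : 0 ≤ α) (hα₁ : α ≤ 1)
    {K : Type*} [NormedAddCommGroup K] [InnerProductSpace ℂ K]
    [FiniteDimensional ℂ K] [Nontrivial K]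
    {Wα : Type*} [NormedAddCommGroup Wα] [InnerProductSpace ℂ Wα] [CompleteSpace Wα]
    (coord : Wα →ₗ[ℂ] (ℕ → K))
    (hinj : Function.Injective coord)
    (hsum : ∀ f : Wα, Summable fun n : ℕ => ((n : ℝ) + 1) ^ α * ‖coord f n‖ ^ 2)
    (hnorm : ∀ f : Wα, ‖f‖ ^ 2 = ∑' n : ℕ, ((n : ℝ) + 1) ^ α * ‖coord f n‖ ^ 2)
    (hsurj : ∀ g : ℕ → K, Summable (fun n : ℕ => ((n : ℝ) + 1) ^ α * ‖g n‖ ^ 2) →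
      ∃ f : Wα, coord f = g)
    (T : Wα →L[ℂ] Wα)
    (hT0 : ∀ f : Wα, coord (T f) 0 = 0)
    (hTn : ∀ (f : Wα) (n : ℕ), coord (T f) (n + 1) = coord f n)
    (hTlow : ∀ f : Wα, ‖f‖ ≤ ‖T f‖)
    (M F : Submodule ℂ Wα) (hMclosed : IsClosed (M : Set Wα))
    (p : ℕ) (hFdim : Module.finrank ℂ F = p) (hFM : F ≤ Mᗮ)
    (hnear : ∀ f : Wα, T f ∈ M → f ∈ M ⊔ F)
    (hMnot : ¬ M ≤ LinearMap.range (T : Wα →ₗ[ℂ] Wα))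
    (e : Fin p → Wα) (he_on : Orthonormal ℂ e)
    (he_mem : ∀ j, e j ∈ F) (he_span : Submodule.span ℂ (Set.range e) = F)
    (r : ℕ) (fb : Fin r → Wα) (hfb_on : Orthonormal ℂ fb)
    (hfb_mem : ∀ i, fb i ∈ M ⊓ (M ⊓ LinearMap.range (T : Wα →ₗ[ℂ] Wα))ᗮ)
    (hfb_span : Submodule.span ℂ (Set.range fb) = M ⊓ (M ⊓ LinearMap.range (T : Wα →ₗ[ℂ] Wα))ᗮ) :
    ∀ f ∈ M, ∃ (c : Fin r → ℕ → ℂ) (d : Fin p → ℕ → ℂ),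
      Summable (fun ik : Fin r × ℕ => ‖c ik.1 ik.2‖ ^ 2) ∧
      Summable (fun jk : Fin p × ℕ => ‖d jk.1 jk.2‖ ^ 2) ∧
      (∑' ik : Fin r × ℕ, ‖c ik.1 ik.2‖ ^ 2) + (∑' jk : Fin p × ℕ, ‖d jk.1 jk.2‖ ^ 2)
        ≤ ‖f‖ ^ 2 ∧
      ∀ n : ℕ, coord f n
        = (∑ i : Fin r, ∑ k ∈ Finset.range (n + 1), c i k • coord (fb i) (n - k))
          + ∑ j : Fin p, ∑ k ∈ Finset.range n, d j k • coord (e j) (n - 1 - k) :=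
  stmt_17_general coord T hT0 hTn hTlow M F hMclosed p hFM hnear e he_on he_span r fb hfb_on
    hfb_span
end

section
/- Let α ∈ [0,1] be a real number, let K be a nonzero finite-dimensional complex Hilbert space, let W_α be the Hilbert space of sequences f : ℕ → K with ‖f‖²_α := Σₙ (n+1)^α ‖f(n)‖²_K < ∞, and let T be the forward shift on W_α, (T f)(0) = 0 and (T f)(n+1) = f(n). Let M be a closed subspace of W_α that is nearly T⁻¹-invariant with defect p, with defect space F orthogonal to M, and assume M ⊆ T(W_α). Let (e_j)_{j=1}^{p} be an orthonormal basis of F. Then there exists a linear subspace N of ℓ²(ℕ, ℂᵖ), invariant under the backward shift d ↦ (n ↦ d(n+1)), such that: (1) M equals the set of all f ∈ W_α for which there exists d ∈ N with f(n) = Σ_{j=1}^{p} Σ_{k=0}^{n−1} d(k)_j · e_j(n−1−k) for all n ∈ ℕ; and (2) for every f ∈ M the element d ∈ N can be chosen so that Σ_{k∈ℕ} ‖d(k)‖² ≤ ‖f‖²_α. -/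
/-!
Since `‖f‖ ≤ ‖T f‖`, `T` is injective, so it has a linear right inverse `R` on `M ⊆ T(W_α)`.
Near invariance puts `R x` in `M ⊕ F`, so `R x = S x + ∑ⱼ cⱼ(x) eⱼ` with `S x ∈ M` and
`cⱼ(x) = ⟪eⱼ, R x⟫`. The sequence `d(k) = c(Sᵏ x)` is the `N`-representative of `x`: reading
`x = T (S x + ∑ⱼ cⱼ(x) eⱼ)` off coordinatewise and inducting on `n` gives the convolution formula,
and `‖R x‖ ≤ ‖x‖` together with Pythagoras gives `‖S x‖² + ‖c(x)‖² ≤ ‖x‖²`, which telescopes to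
`∑ₖ ‖d(k)‖² ≤ ‖x‖²`. The backward shift of the sequence of `x` is the sequence of `S x`, so the
range `N` of the linear map `x ↦ d` is shift invariant, and injectivity of the coordinates shows
that every `f` represented by some `d ∈ N` lies in `M`.
-/

section

open Submodule Set
open scoped InnerProductSpace

theorem LinearMap.exists_rightInverse_on_of_le_range {R M N : Type*} [Ring R] [AddCommGroup M]
    [Module R M] [AddCommGroup N] [Module R N] (f : M →ₗ[R] N) (hf : Function.Injective f)
    {P : Submodule R N} (hP : P ≤ LinearMap.range f) :
    ∃ g : P →ₗ[R] M, ∀ x, f (g x) = x :=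
  ⟨(LinearEquiv.ofInjective f hf).symm.toLinearMap ∘ₗ Submodule.inclusion hP,
    fun x => LinearEquiv.ofInjective_symm_apply f (h := hf) (Submodule.inclusion hP x)⟩

theorem sum_range_add_le_of_add_le {a u : ℕ → ℝ} (h : ∀ k, a k + u (k + 1) ≤ u k) (n : ℕ) :
    ∑ k ∈ Finset.range n, a k + u n ≤ u 0 := by
  induction n with
  | zero => simp
  | succ n ih => rw [Finset.sum_range_succ]; linarith [h n]

variable {𝕜 H ι : Type*} [RCLike 𝕜] [NormedAddCommGroup H] [InnerProductSpace 𝕜 H]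

variable (𝕜) in
def innerCoeffs (e : ι → H) : H →ₗ[𝕜] EuclideanSpace 𝕜 ι :=
  (EuclideanSpace.equiv ι 𝕜).symm.toLinearMap ∘ₗ LinearMap.pi fun j => innerₛₗ 𝕜 (e j)

@[simp]
theorem innerCoeffs_apply (e : ι → H) (x : H) (j : ι) : innerCoeffs 𝕜 e x j = ⟪e j, x⟫_𝕜 := rfl

variable [Fintype ι]

namespace Orthonormal

variable {e : ι → H}

theorem sum_inner_smul_eq_self (he : Orthonormal 𝕜 e) {g : H} (hg : g ∈ span 𝕜 (range e)) :
    ∑ j, ⟪e j, g⟫_𝕜 • e j = g := by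
  obtain ⟨c, rfl⟩ := (mem_span_range_iff_exists_fun 𝕜).mp hg
  simp_rw [he.inner_right_fintype]

theorem norm_sum_smul_sq_s19 (he : Orthonormal 𝕜 e) (c : ι → 𝕜) :
    ‖∑ j, c j • e j‖ ^ 2 = ∑ j, ‖c j‖ ^ 2 := by
  rw [← RCLike.ofReal_inj (K := 𝕜), RCLike.ofReal_pow, ← inner_self_eq_norm_sq_to_K, he.inner_sum,
    RCLike.ofReal_sum]
  simp_rw [RCLike.conj_mul, RCLike.ofReal_pow]

end Orthonormal

variable (𝕜) in
def spanProj (e : ι → H) : H →ₗ[𝕜] H :=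
  ∑ j, (innerₛₗ 𝕜 (e j)).smulRight (e j)

theorem spanProj_apply (e : ι → H) (y : H) : spanProj 𝕜 e y = ∑ j, innerCoeffs 𝕜 e y j • e j := by
  simp [spanProj]

theorem sub_spanProj_mem {M : Submodule 𝕜 H} {e : ι → H} (he : Orthonormal 𝕜 e)
    (heM : span 𝕜 (range e) ≤ Mᗮ) {y : H} (hy : y ∈ M ⊔ span 𝕜 (range e)) :
    y - spanProj 𝕜 e y ∈ M := by
  obtain ⟨m, hm, g, hg, rfl⟩ := mem_sup.mp hy
  have hem : ∀ j, ⟪e j, m⟫_𝕜 = 0 := fun j =>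
    inner_left_of_mem_orthogonal hm (heM (subset_span (mem_range_self j)))
  simpa [spanProj_apply, inner_add_right, hem, he.sum_inner_smul_eq_self hg] using hm

section DefectStep

variable {M : Submodule 𝕜 H} {e : ι → H} (he : Orthonormal 𝕜 e) (heM : span 𝕜 (range e) ≤ Mᗮ)
  (R : M →ₗ[𝕜] H) (hR : ∀ x, R x ∈ M ⊔ span 𝕜 (range e))

def defectStep : Module.End 𝕜 M :=
  LinearMap.codRestrict M (R - spanProj 𝕜 e ∘ₗ R) fun x => sub_spanProj_mem he heM (hR x)

theorem apply_eq_defectStep_add (x : M) :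
    R x = defectStep he heM R hR x + ∑ j, innerCoeffs 𝕜 e (R x) j • e j := by
  simp [defectStep, spanProj_apply]

theorem norm_defectStep_sq_add (x : M) :
    ‖defectStep he heM R hR x‖ ^ 2 + ‖innerCoeffs 𝕜 e (R x)‖ ^ 2 = ‖R x‖ ^ 2 := by
  have horth : ⟪(defectStep he heM R hR x : H), ∑ j, innerCoeffs 𝕜 e (R x) j • e j⟫_𝕜 = 0 :=
    inner_right_of_mem_orthogonal (defectStep he heM R hR x).2
      (heM (sum_mem fun j _ => smul_mem _ _ (subset_span (mem_range_self j))))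
  calc ‖defectStep he heM R hR x‖ ^ 2 + ‖innerCoeffs 𝕜 e (R x)‖ ^ 2
      = ‖(defectStep he heM R hR x : H)‖ ^ 2 + ‖∑ j, innerCoeffs 𝕜 e (R x) j • e j‖ ^ 2 := by
        rw [coe_norm, he.norm_sum_smul_sq_s19, EuclideanSpace.norm_sq_eq]
    _ = ‖R x‖ ^ 2 := by
        simp only [sq]
        rw [← norm_add_sq_eq_norm_sq_add_norm_sq_of_inner_eq_zero _ _ horth,
          ← apply_eq_defectStep_add]

def defectCoeffs : M →ₗ[𝕜] ℕ → EuclideanSpace 𝕜 ι :=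
  LinearMap.pi fun k => innerCoeffs 𝕜 e ∘ₗ R ∘ₗ defectStep he heM R hR ^ k

theorem defectCoeffs_apply (x : M) (k : ℕ) :
    defectCoeffs he heM R hR x k = innerCoeffs 𝕜 e (R ((defectStep he heM R hR ^ k) x)) := rfl

theorem defectCoeffs_zero (x : M) : defectCoeffs he heM R hR x 0 = innerCoeffs 𝕜 e (R x) := rfl

theorem defectCoeffs_succ (x : M) (k : ℕ) :
    defectCoeffs he heM R hR x (k + 1) = defectCoeffs he heM R hR (defectStep he heM R hR x) k := by
  rw [defectCoeffs_apply, defectCoeffs_apply, pow_succ, Module.End.mul_apply]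

theorem apply_eq_sum_defectCoeffs {V : Type*} [AddCommGroup V] [Module 𝕜 V]
    (L : H →ₗ[𝕜] ℕ → V) (hL0 : ∀ x : M, L x 0 = 0)
    (hLsucc : ∀ (x : M) (n : ℕ), L x (n + 1) = L (R x) n) (n : ℕ) (x : M) :
    L x n = ∑ j, ∑ k ∈ Finset.range n, defectCoeffs he heM R hR x k j • L (e j) (n - 1 - k) := by
  induction n generalizing x with
  | zero => simp [hL0]
  | succ n ih =>
    rw [hLsucc, apply_eq_defectStep_add he heM R hR x, map_add, Pi.add_apply, ih, map_sum,
      Finset.sum_apply, ← Finset.sum_add_distrib]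
    refine Finset.sum_congr rfl fun j _ => ?_
    rw [Finset.sum_range_succ']
    simp [defectCoeffs_succ, defectCoeffs_zero, Nat.sub_sub, add_comm]

theorem sum_range_norm_defectCoeffs_sq_le (hRle : ∀ x, ‖R x‖ ≤ ‖x‖) (x : M) (n : ℕ) :
    ∑ k ∈ Finset.range n, ‖defectCoeffs he heM R hR x k‖ ^ 2 ≤ ‖x‖ ^ 2 := by
  set S := defectStep he heM R hR
  have hstep (k : ℕ) :
      ‖defectCoeffs he heM R hR x k‖ ^ 2 + ‖(S ^ (k + 1)) x‖ ^ 2 ≤ ‖(S ^ k) x‖ ^ 2 := by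
    rw [pow_succ' S, Module.End.mul_apply, add_comm, defectCoeffs_apply, norm_defectStep_sq_add]
    exact pow_le_pow_left₀ (norm_nonneg _) (hRle _) 2
  have := sum_range_add_le_of_add_le (u := fun k => ‖(S ^ k) x‖ ^ 2) hstep n
  simp only [pow_zero, Module.End.one_apply] at this
  linarith [sq_nonneg ‖(S ^ n) x‖]

theorem memℓp_defectCoeffs (hRle : ∀ x, ‖R x‖ ≤ ‖x‖) (x : M) :
    Memℓp (defectCoeffs he heM R hR x) 2 := by
  refine memℓp_gen ?_
  simp only [ENNReal.toReal_ofNat, Real.rpow_two]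
  exact summable_of_sum_range_le (fun _ => sq_nonneg _)
    (sum_range_norm_defectCoeffs_sq_le he heM R hR hRle x)

theorem tsum_norm_defectCoeffs_sq_le (hRle : ∀ x, ‖R x‖ ≤ ‖x‖) (x : M) :
    ∑' k, ‖defectCoeffs he heM R hR x k‖ ^ 2 ≤ ‖x‖ ^ 2 :=
  Real.tsum_le_of_sum_range_le (fun _ => sq_nonneg _)
    (sum_range_norm_defectCoeffs_sq_le he heM R hR hRle x)

def defectCoeffsLp (hRle : ∀ x, ‖R x‖ ≤ ‖x‖) : M →ₗ[𝕜] lp (fun _ : ℕ => EuclideanSpace 𝕜 ι) 2 where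
  toFun x := ⟨defectCoeffs he heM R hR x, memℓp_defectCoeffs he heM R hR hRle x⟩
  map_add' x y := lp.ext (map_add _ x y)
  map_smul' c x := lp.ext (map_smul _ c x)

theorem coe_defectCoeffsLp (hRle : ∀ x, ‖R x‖ ≤ ‖x‖) (x : M) :
    ⇑(defectCoeffsLp he heM R hR hRle x) = defectCoeffs he heM R hR x := rfl

theorem shift_mem_range_defectCoeffsLp (hRle : ∀ x, ‖R x‖ ≤ ‖x‖)
    {a b : lp (fun _ : ℕ => EuclideanSpace 𝕜 ι) 2}
    (ha : a ∈ LinearMap.range (defectCoeffsLp he heM R hR hRle)) (hb : ∀ n, b n = a (n + 1)) :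
    b ∈ LinearMap.range (defectCoeffsLp he heM R hR hRle) := by
  obtain ⟨x, rfl⟩ := ha
  refine ⟨defectStep he heM R hR x, lp.ext <| funext fun n => ?_⟩
  rw [hb, coe_defectCoeffsLp, coe_defectCoeffsLp, defectCoeffs_succ]

end DefectStep

end

theorem stmt_19_general
    {K : Type*} [NormedAddCommGroup K] [InnerProductSpace ℂ K]
    {Wα : Type*} [NormedAddCommGroup Wα] [InnerProductSpace ℂ Wα]
    (coord : Wα →ₗ[ℂ] (ℕ → K))
    (hinj : Function.Injective coord)
    (T : Wα →L[ℂ] Wα)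
    (hT0 : ∀ f : Wα, coord (T f) 0 = 0)
    (hTn : ∀ (f : Wα) (n : ℕ), coord (T f) (n + 1) = coord f n)
    (hTlow : ∀ f : Wα, ‖f‖ ≤ ‖T f‖)
    (M F : Submodule ℂ Wα)
    (p : ℕ) (hFM : F ≤ Mᗮ)
    (hnear : ∀ f : Wα, T f ∈ M → f ∈ M ⊔ F)
    (hMsub : M ≤ LinearMap.range (T : Wα →ₗ[ℂ] Wα))
    (e : Fin p → Wα) (he_on : Orthonormal ℂ e)
    (he_span : Submodule.span ℂ (Set.range e) = F) :
    ∃ N : Submodule ℂ (lp (fun _ : ℕ => EuclideanSpace ℂ (Fin p)) 2),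
      -- N is invariant under the backward shift
      (∀ a ∈ N, ∀ b : lp (fun _ : ℕ => EuclideanSpace ℂ (Fin p)) 2,
        (∀ n : ℕ, b n = a (n + 1)) → b ∈ N) ∧
      -- (1) M is exactly the set of elements represented by d ∈ N
      (∀ f : Wα, f ∈ M ↔ ∃ a ∈ N, ∀ n : ℕ,
        coord f n
          = ∑ j : Fin p, ∑ k ∈ Finset.range n, ((a k) j) • coord (e j) (n - 1 - k)) ∧
      -- (2) the representation can be chosen with norm control
      (∀ f ∈ M, ∃ a ∈ N, (∀ n : ℕ,
        coord f n
          = ∑ j : Fin p, ∑ k ∈ Finset.range n, ((a k) j) • coord (e j) (n - 1 - k)) ∧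
        (∑' k : ℕ, ‖a k‖ ^ 2) ≤ ‖f‖ ^ 2) := by
  subst he_span
  have hTinj : Function.Injective T :=
    (AddMonoidHomClass.antilipschitz_of_bound T (K := 1) (by simpa using hTlow)).injective
  obtain ⟨R, hTR⟩ := (T : Wα →ₗ[ℂ] Wα).exists_rightInverse_on_of_le_range hTinj hMsub
  simp only [ContinuousLinearMap.coe_coe] at hTR
  have hR (x : M) : R x ∈ M ⊔ Submodule.span ℂ (Set.range e) := hnear _ (by simp [hTR])
  have hRle (x : M) : ‖R x‖ ≤ ‖x‖ := by simpa [hTR] using hTlow (R x)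
  have hcoord := apply_eq_sum_defectCoeffs he_on hFM R hR coord
    (fun x => by simpa [hTR] using hT0 (R x)) (fun x n => by simpa [hTR] using hTn (R x) n)
  set Φ := defectCoeffsLp he_on hFM R hR hRle
  refine ⟨LinearMap.range Φ,
    fun a ha b hb => shift_mem_range_defectCoeffsLp he_on hFM R hR hRle ha hb,
    fun f => ⟨fun hf => ⟨Φ ⟨f, hf⟩, ⟨_, rfl⟩, fun n => hcoord n ⟨f, hf⟩⟩, ?_⟩,
    fun f hf => ⟨Φ ⟨f, hf⟩, ⟨_, rfl⟩, fun n => hcoord n ⟨f, hf⟩,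
      tsum_norm_defectCoeffs_sq_le he_on hFM R hR hRle ⟨f, hf⟩⟩⟩
  rintro ⟨_, ⟨x, rfl⟩, hf⟩
  obtain rfl : f = x := hinj (funext fun n => (hf n).trans (hcoord n x).symm)
  exact x.2

/-- description of nearly `T⁻¹`-invariant subspaces with defect `p` of the
weighted sequence space `W_α` (the coefficient model of the Dirichlet-type space `D_α`,
`α ∈ [0,1]`), case `M ⊆ T(W_α)`: there is a backward-shift invariant linear subspace `N` of
`ℓ²(ℕ, ℂᵖ)` parametrizing `M`, with norm control. -/
theorem stmt_19 (α : ℝ) (hα₀ : 0 ≤ α) (hα₁ : α ≤ 1)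
    {K : Type*} [NormedAddCommGroup K] [InnerProductSpace ℂ K]
    [FiniteDimensional ℂ K] [Nontrivial K]
    {Wα : Type*} [NormedAddCommGroup Wα] [InnerProductSpace ℂ Wα] [CompleteSpace Wα]
    (coord : Wα →ₗ[ℂ] (ℕ → K))
    (hinj : Function.Injective coord)
    (hsum : ∀ f : Wα, Summable fun n : ℕ => ((n : ℝ) + 1) ^ α * ‖coord f n‖ ^ 2)
    (hnorm : ∀ f : Wα, ‖f‖ ^ 2 = ∑' n : ℕ, ((n : ℝ) + 1) ^ α * ‖coord f n‖ ^ 2)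
    (hsurj : ∀ g : ℕ → K, Summable (fun n : ℕ => ((n : ℝ) + 1) ^ α * ‖g n‖ ^ 2) →
      ∃ f : Wα, coord f = g)
    (T : Wα →L[ℂ] Wα)
    (hT0 : ∀ f : Wα, coord (T f) 0 = 0)
    (hTn : ∀ (f : Wα) (n : ℕ), coord (T f) (n + 1) = coord f n)
    (hTlow : ∀ f : Wα, ‖f‖ ≤ ‖T f‖)
    (M F : Submodule ℂ Wα) (hMclosed : IsClosed (M : Set Wα))
    (p : ℕ) (hFdim : Module.finrank ℂ F = p) (hFM : F ≤ Mᗮ)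
    (hnear : ∀ f : Wα, T f ∈ M → f ∈ M ⊔ F)
    (hMsub : M ≤ LinearMap.range (T : Wα →ₗ[ℂ] Wα))
    (e : Fin p → Wα) (he_on : Orthonormal ℂ e)
    (he_mem : ∀ j, e j ∈ F) (he_span : Submodule.span ℂ (Set.range e) = F) :
    ∃ N : Submodule ℂ (lp (fun _ : ℕ => EuclideanSpace ℂ (Fin p)) 2),
      -- N is invariant under the backward shift
      (∀ a ∈ N, ∀ b : lp (fun _ : ℕ => EuclideanSpace ℂ (Fin p)) 2,
        (∀ n : ℕ, b n = a (n + 1)) → b ∈ N) ∧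
      -- (1) M is exactly the set of elements represented by d ∈ N
      (∀ f : Wα, f ∈ M ↔ ∃ a ∈ N, ∀ n : ℕ,
        coord f n
          = ∑ j : Fin p, ∑ k ∈ Finset.range n, ((a k) j) • coord (e j) (n - 1 - k)) ∧
      -- (2) the representation can be chosen with norm control
      (∀ f ∈ M, ∃ a ∈ N, (∀ n : ℕ,
        coord f n
          = ∑ j : Fin p, ∑ k ∈ Finset.range n, ((a k) j) • coord (e j) (n - 1 - k)) ∧
        (∑' k : ℕ, ‖a k‖ ^ 2) ≤ ‖f‖ ^ 2) :=
  stmt_19_general coord hinj T hT0 hTn hTlow M F p hFM hnear hMsub e he_on he_span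
end
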